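/- arXiv:1006.0505 — 8 statements merged into one kernel-verified Lean document; each statement's English description precedes it below -/
import Mathlib

section
/- For every real p > -1/2 one has Γ(1/2)·Γ(p+1/2) ≥ (1 + p²/2)·Γ((p+1)/2)², with equality if and only if p = 0 or p = 2. In particular, Γ(1/2)·Γ(p+1/2) − Γ((p+1)/2)² > 0 for all p ∈ (-1/2,∞) with p ≠ 0, so that a_p is well defined; moreover a_p ∈ (0,1) for all p ∈ (-1/2,∞) \ {0,2}, and a_2 = 1. -/
/-
Equip `(0, ∞)` with the weight `exp (-x ^ 2 / 2)`, whose moments are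
`∫ x ^ s exp (-x ^ 2 / 2) = 2 ^ ((s - 1) / 2) Γ((s + 1) / 2)`. The squared distance from `x ^ p`
to `span {1, x ^ 2}` is then, up to a positive factor,
`Γ(1/2) Γ(p + 1/2) - (1 + p ^ 2 / 2) Γ((p + 1)/2) ^ 2`, which gives the inequality; equality means
`x ^ p ∈ span {1, x ^ 2}` on `(0, ∞)`, i.e. `p ∈ {0, 2}`. The bounds on `a_p` are rearrangements
of the strict inequality and of the equality at `p = 2`.
-/

open Real Set

/-- `a_p` for `p ∈ (-1/2, ∞)`: for `p ≠ 0` it is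
`|p|·Γ((p+1)/2) / (√2·√(Γ(1/2)·Γ(p+1/2) − Γ((p+1)/2)²))`, and `a_0 := 2/π`. -/
noncomputable def aP (p : ℝ) : ℝ :=
  if p = 0 then 2 / Real.pi
  else |p| * Real.Gamma ((p + 1) / 2) /
    (Real.sqrt 2 *
      Real.sqrt (Real.Gamma (1 / 2) * Real.Gamma (p + 1 / 2) - Real.Gamma ((p + 1) / 2) ^ 2))

open MeasureTheory

-- `∫ x in Ioi 0, x ^ s * exp (-(1 / 2) * x ^ 2)` for `-1 < s`
-- (`integral_rpow_mul_exp_neg_half_sq`).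
noncomputable def gaussMoment (s : ℝ) : ℝ := 2 ^ ((s - 1) / 2) * Gamma ((s + 1) / 2)

lemma gaussMoment_pos {s : ℝ} (hs : -1 < s) : 0 < gaussMoment s :=
  mul_pos (rpow_pos_of_pos two_pos _) (Gamma_pos_of_pos (by linarith))

lemma integral_rpow_mul_exp_neg_half_sq {s : ℝ} (hs : -1 < s) :
    ∫ x in Ioi (0 : ℝ), x ^ s * exp (-(1 / 2) * x ^ 2) = gaussMoment s := by
  have h := integral_rpow_mul_exp_neg_mul_rpow two_pos hs (by norm_num : (0 : ℝ) < 1 / 2)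
  simp_rw [rpow_two] at h
  rw [h, gaussMoment, one_div, inv_rpow zero_le_two, ← rpow_neg zero_le_two, neg_div, neg_neg,
    show (s - 1) / 2 = (s + 1) / 2 - 1 by ring, rpow_sub_one two_ne_zero]
  ring

lemma gaussMoment_add_two {s : ℝ} (hs : s ≠ -1) :
    gaussMoment (s + 2) = (s + 1) * gaussMoment s := by
  have hs' : (s + 1) / 2 ≠ 0 := by contrapose! hs; linarith
  rw [gaussMoment, gaussMoment, show (s + 2 + 1) / 2 = (s + 1) / 2 + 1 by ring, Gamma_add_one hs',
    show (s + 2 - 1) / 2 = (s - 1) / 2 + 1 by ring, rpow_add_one two_ne_zero]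
  ring

lemma gaussMoment_sq (s : ℝ) : gaussMoment s ^ 2 = 2 ^ (s - 1) * Gamma ((s + 1) / 2) ^ 2 := by
  rw [gaussMoment, mul_pow, ← rpow_natCast, ← rpow_mul zero_le_two]
  norm_num

lemma gaussMoment_add_self_mul_zero (s : ℝ) :
    gaussMoment (s + s) * gaussMoment 0 = 2 ^ (s - 1) * (Gamma (1 / 2) * Gamma (s + 1 / 2)) := by
  rw [gaussMoment, gaussMoment, mul_mul_mul_comm, ← rpow_add two_pos]
  ring_nf

section GramForm

variable {ι : Type*} [Fintype ι] (a s : ι → ℝ)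

lemma sq_sum_rpow_mul_exp_eqOn :
    EqOn (fun x : ℝ => (∑ i, a i * x ^ s i) ^ 2 * exp (-(1 / 2) * x ^ 2))
      (fun x => ∑ i, ∑ j, a i * a j * (x ^ (s i + s j) * exp (-(1 / 2) * x ^ 2))) (Ioi 0) := by
  intro x hx
  dsimp only
  rw [sq, Finset.sum_mul_sum, Finset.sum_mul]
  refine Finset.sum_congr rfl fun i _ => ?_
  rw [Finset.sum_mul]
  refine Finset.sum_congr rfl fun j _ => ?_
  rw [rpow_add (mem_Ioi.mp hx)]
  ring

variable {s}

lemma integrableOn_sq_sum_rpow_mul_exp (hs : ∀ i, -1 / 2 < s i) :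
    IntegrableOn (fun x : ℝ => (∑ i, a i * x ^ s i) ^ 2 * exp (-(1 / 2) * x ^ 2)) (Ioi 0) :=
  IntegrableOn.congr_fun (integrable_finsetSum _ fun i _ => integrable_finsetSum _ fun j _ =>
      (integrableOn_rpow_mul_exp_neg_mul_sq (by norm_num) (by linarith [hs i, hs j])).const_mul _)
    (sq_sum_rpow_mul_exp_eqOn a s).symm measurableSet_Ioi

lemma integral_sq_sum_rpow_mul_exp (hs : ∀ i, -1 / 2 < s i) :
    ∫ x in Ioi (0 : ℝ), (∑ i, a i * x ^ s i) ^ 2 * exp (-(1 / 2) * x ^ 2) =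
      ∑ i, ∑ j, a i * a j * gaussMoment (s i + s j) := by
  have hint i j : IntegrableOn (fun x : ℝ => a i * a j * (x ^ (s i + s j) * exp (-(1 / 2) * x ^ 2)))
      (Ioi 0) :=
    (integrableOn_rpow_mul_exp_neg_mul_sq (by norm_num) (by linarith [hs i, hs j])).const_mul _
  rw [setIntegral_congr_fun measurableSet_Ioi (sq_sum_rpow_mul_exp_eqOn a s),
    integral_finsetSum _ fun i _ => integrable_finsetSum _ fun j _ => hint i j]
  refine Finset.sum_congr rfl fun i _ => ?_
  rw [integral_finsetSum _ fun j _ => hint i j]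
  refine Finset.sum_congr rfl fun j _ => ?_
  rw [integral_const_mul, integral_rpow_mul_exp_neg_half_sq (by linarith [hs i, hs j])]

end GramForm

noncomputable def gammaDefect (p : ℝ) : ℝ :=
  Gamma (1 / 2) * Gamma (p + 1 / 2) - (1 + p ^ 2 / 2) * Gamma ((p + 1) / 2) ^ 2

/- `∑ i, residualCoeff p i * x ^ residualExp p i` is `2 * gaussMoment 0` times the residual of
`x ^ p` after orthogonal projection onto `span {1, x ^ 2}` in `L²((0, ∞), exp (-x ^ 2 / 2) dx)`. -/
noncomputable def residualCoeff (p : ℝ) : Fin 3 → ℝ :=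
  ![2 * gaussMoment 0, -(p * gaussMoment p), (p - 2) * gaussMoment p]

def residualExp (p : ℝ) : Fin 3 → ℝ := ![p, 2, 0]

lemma gram_residual_eq {p : ℝ} (hp : p ≠ -1) :
    ∑ i, ∑ j, residualCoeff p i * residualCoeff p j *
        gaussMoment (residualExp p i + residualExp p j) =
      2 ^ (p + 1) * gaussMoment 0 * gammaDefect p := by
  have h2 : gaussMoment 2 = gaussMoment 0 := by
    simpa using gaussMoment_add_two (s := 0) (by norm_num)
  have h4 : gaussMoment (2 + 2) = 3 * gaussMoment 0 := by
    rw [gaussMoment_add_two (by norm_num), h2]; norm_num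
  have hpow : (2 : ℝ) ^ (p + 1) = 4 * 2 ^ (p - 1) := by
    rw [show p + 1 = p - 1 + 2 by ring, rpow_add two_pos]; norm_num [mul_comm]
  simp only [Fin.sum_univ_three, residualCoeff, residualExp, Matrix.cons_val_zero,
    Matrix.cons_val_one, Matrix.cons_val_two, Matrix.head_cons, Matrix.tail_cons, add_zero, zero_add, add_comm 2 p,
    gaussMoment_add_two hp, h2, h4]
  rw [gammaDefect, hpow]
  linear_combination (4 * gaussMoment 0) * gaussMoment_add_self_mul_zero p
    - ((2 * p ^ 2 + 4) * gaussMoment 0) * gaussMoment_sq p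

lemma neg_half_lt_residualExp {p : ℝ} (hp : -1 / 2 < p) (i : Fin 3) : -1 / 2 < residualExp p i := by
  fin_cases i <;> simp [residualExp] <;> linarith

lemma residual_sum_eq (p x : ℝ) :
    ∑ i, residualCoeff p i * x ^ residualExp p i =
      2 * gaussMoment 0 * x ^ p - p * gaussMoment p * x ^ 2 + (p - 2) * gaussMoment p := by
  simp only [residualCoeff, residualExp, Fin.sum_univ_three, Fin.isValue, Matrix.cons_val_zero,
    Matrix.cons_val_one, rpow_ofNat, Matrix.cons_val, rpow_zero, mul_one]
  ring

lemma integral_residual_sq {p : ℝ} (hp : -1 / 2 < p) :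
    ∫ x in Ioi (0 : ℝ), (∑ i, residualCoeff p i * x ^ residualExp p i) ^ 2 *
      exp (-(1 / 2) * x ^ 2) = 2 ^ (p + 1) * gaussMoment 0 * gammaDefect p := by
  rw [integral_sq_sum_rpow_mul_exp _ (neg_half_lt_residualExp hp), gram_residual_eq (by linarith)]

lemma gammaDefect_nonneg {p : ℝ} (hp : -1 / 2 < p) : 0 ≤ gammaDefect p := by
  have hpos : 0 < 2 ^ (p + 1) * gaussMoment 0 :=
    mul_pos (rpow_pos_of_pos two_pos _) (gaussMoment_pos (by norm_num))
  refine nonneg_of_mul_nonneg_right ?_ hpos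
  rw [← integral_residual_sq hp]
  exact setIntegral_nonneg measurableSet_Ioi fun x _ => by positivity

lemma residual_eq_zero_of_gammaDefect_eq_zero {p : ℝ} (hp : -1 / 2 < p) (h : gammaDefect p = 0)
    {x : ℝ} (hx : 0 < x) : ∑ i, residualCoeff p i * x ^ residualExp p i = 0 := by
  have hint := integral_residual_sq hp
  rw [h, mul_zero, setIntegral_eq_zero_iff_of_nonneg_ae (ae_of_all _ fun x => by positivity)
    (integrableOn_sq_sum_rpow_mul_exp _ (neg_half_lt_residualExp hp))] at hint
  have hcont : ContinuousOn (fun x : ℝ => (∑ i, residualCoeff p i * x ^ residualExp p i) ^ 2 *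
      exp (-(1 / 2) * x ^ 2)) (Ioi 0) := by
    refine ((continuousOn_finsetSum _ fun i _ => continuousOn_const.mul
      (continuousOn_id.rpow_const fun y hy => Or.inl (ne_of_gt hy))).pow 2).mul ?_
    fun_prop
  simpa [exp_ne_zero] using Measure.eqOn_open_of_ae_eq hint isOpen_Ioi hcont continuousOn_const hx

lemma eq_zero_or_two_of_gammaDefect_eq_zero {p : ℝ} (hp : -1 / 2 < p) (h : gammaDefect p = 0) :
    p = 0 ∨ p = 2 := by
  have hQ {x : ℝ} (hx : 0 < x) := (residual_sum_eq p x).symm.trans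
    (residual_eq_zero_of_gammaDefect_eq_zero hp h hx)
  have hA : gaussMoment 0 ≠ 0 := (gaussMoment_pos (by norm_num)).ne'
  -- `x = 1` forces `gaussMoment p = gaussMoment 0`; then `x = 2, 4` give two polynomial equations
  -- in `2 ^ p` whose only common solutions are `p = 0, 2`.
  have e1 := hQ one_pos
  have e2 := hQ two_pos
  have e4 := hQ four_pos
  have hpow4 : (4 : ℝ) ^ p = (2 ^ p) ^ 2 := by
    rw [show (4 : ℝ) = 2 * 2 by norm_num, mul_rpow zero_le_two zero_le_two, sq]
  simp only [one_rpow] at e1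
  have hB : gaussMoment p = gaussMoment 0 := by linear_combination -e1 / 2
  rw [hB] at e2
  rw [hB, hpow4] at e4
  have h2 : gaussMoment 0 * (2 * 2 ^ p - 3 * p - 2) = 0 := by linear_combination e2
  have h4 : gaussMoment 0 * (2 * (2 ^ p) ^ 2 - 15 * p - 2) = 0 := by linear_combination e4
  replace h2 := (mul_eq_zero.mp h2).resolve_left hA
  replace h4 := (mul_eq_zero.mp h4).resolve_left hA
  have : p * (p - 2) = 0 := by
    linear_combination (-(2 * 2 ^ p + 3 * p + 2) * h2 + 2 * h4) / 9
  simpa [sub_eq_zero] using this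

lemma gammaDefect_zero : gammaDefect 0 = 0 := by
  simp [gammaDefect, sq]

lemma gammaDefect_two : gammaDefect 2 = 0 := by
  rw [gammaDefect, show (2 : ℝ) + 1 / 2 = 1 / 2 + 1 + 1 by norm_num,
    show ((2 : ℝ) + 1) / 2 = 1 / 2 + 1 by norm_num, Gamma_add_one (by norm_num),
    Gamma_add_one (by norm_num)]
  ring

lemma gammaDefect_eq_zero_iff {p : ℝ} (hp : -1 / 2 < p) : gammaDefect p = 0 ↔ p = 0 ∨ p = 2 :=
  ⟨eq_zero_or_two_of_gammaDefect_eq_zero hp,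
    by rintro (rfl | rfl); exacts [gammaDefect_zero, gammaDefect_two]⟩

lemma aP_eq_of_ne_zero {p : ℝ} (h0 : p ≠ 0) :
    aP p = |p| * Gamma ((p + 1) / 2) /
      √(2 * gammaDefect p + (|p| * Gamma ((p + 1) / 2)) ^ 2) := by
  rw [aP, if_neg h0, ← sqrt_mul zero_le_two, gammaDefect, mul_pow, sq_abs]
  ring_nf

lemma aP_mem_Ioo {p : ℝ} (hp : -1 < p) (h0 : p ≠ 0) (hD : 0 < gammaDefect p) :
    aP p ∈ Ioo 0 1 := by
  have hnum : 0 < |p| * Gamma ((p + 1) / 2) :=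
    mul_pos (abs_pos.mpr h0) (Gamma_pos_of_pos (by linarith))
  have hden : 0 < √(2 * gammaDefect p + (|p| * Gamma ((p + 1) / 2)) ^ 2) := by positivity
  rw [aP_eq_of_ne_zero h0]
  refine ⟨div_pos hnum hden, (div_lt_one hden).mpr ((lt_sqrt hnum.le).mpr (by linarith))⟩

lemma aP_eq_one {p : ℝ} (hp : -1 < p) (h0 : p ≠ 0) (hD : gammaDefect p = 0) : aP p = 1 := by
  have hnum : 0 < |p| * Gamma ((p + 1) / 2) :=
    mul_pos (abs_pos.mpr h0) (Gamma_pos_of_pos (by linarith))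
  rw [aP_eq_of_ne_zero h0, hD, mul_zero, zero_add, sqrt_sq hnum.le, div_self hnum.ne']

theorem stmt0 :
    (∀ p : ℝ, -1 / 2 < p →
      (1 + p ^ 2 / 2) * Real.Gamma ((p + 1) / 2) ^ 2 ≤
          Real.Gamma (1 / 2) * Real.Gamma (p + 1 / 2) ∧
      (Real.Gamma (1 / 2) * Real.Gamma (p + 1 / 2) =
          (1 + p ^ 2 / 2) * Real.Gamma ((p + 1) / 2) ^ 2 ↔ p = 0 ∨ p = 2)) ∧
    (∀ p : ℝ, -1 / 2 < p → p ≠ 0 →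
      0 < Real.Gamma (1 / 2) * Real.Gamma (p + 1 / 2) - Real.Gamma ((p + 1) / 2) ^ 2) ∧
    (∀ p : ℝ, -1 / 2 < p → p ≠ 0 → p ≠ 2 → aP p ∈ Set.Ioo (0 : ℝ) 1) ∧
    aP 2 = 1 := by
  refine ⟨fun p hp => ⟨sub_nonneg.mp (gammaDefect_nonneg hp), ?_⟩, fun p hp h0 => ?_,
    fun p hp h0 h2 => ?_, aP_eq_one (by norm_num) two_ne_zero gammaDefect_two⟩
  · rw [← sub_eq_zero]
    exact gammaDefect_eq_zero_iff hp
  · have hG : 0 < Gamma ((p + 1) / 2) := Gamma_pos_of_pos (by linarith)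
    have hsplit : Gamma (1 / 2) * Gamma (p + 1 / 2) - Gamma ((p + 1) / 2) ^ 2 =
        gammaDefect p + p ^ 2 / 2 * Gamma ((p + 1) / 2) ^ 2 := by
      rw [gammaDefect]; ring
    rw [hsplit]
    exact add_pos_of_nonneg_of_pos (gammaDefect_nonneg hp) (by positivity)
  · refine aP_mem_Ioo (by linarith) h0 ((gammaDefect_nonneg hp).lt_of_ne' ?_)
    rw [Ne, gammaDefect_eq_zero_iff hp]
    exact not_or_intro h0 h2
end

section
/- As p tends to 0 through nonzero values, a_p tends to 2/π; that is, the function p ↦ a_p on (-1/2,∞) \ {0} extends continuously to p = 0 with value a_0 = 2/π. -/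
/-!
With `Q p = Γ(1/2) Γ(p + 1/2) / Γ((p + 1)/2)²` the radicand in `a_p` is `Γ((p + 1)/2)² (Q p - 1)`,
so `a_p = (2 (Q p - 1) / p²)^(-1/2)` and it suffices to show `(Q p - 1) / p² → π² / 8`.
`Q` is analytic at `0` with `Q 0 = 1` and `Q' 0 = 0`, so `(Q p - 1) / p² → Q'' 0 / 2`.
Euler's reflection formula gives `Q p · Q (-p) = cos²(πp/2) / cos(πp) = 1 + sin²(πp/2) / cos(πp)`,
and comparing second-order terms yields `Q'' 0 = π² / 4`, without computing the trigamma
value `ψ'(1/2)`.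
-/

open Real Set Filter Topology

theorem Complex.analyticAt_Gamma {s : ℂ} (hs : ∀ m : ℕ, s ≠ -m) :
    AnalyticAt ℂ Complex.Gamma s := by
  simpa using (differentiable_one_div_Gamma.analyticAt s).fun_inv (inv_ne_zero (Gamma_ne_zero hs))

theorem Real.analyticAt_Gamma {x : ℝ} (hx : ∀ m : ℕ, x ≠ -m) : AnalyticAt ℝ Gamma x := by
  have hx' : ∀ m : ℕ, (x : ℂ) ≠ -m := fun m h => hx m (mod_cast h)
  have h : Gamma = fun y : ℝ => Complex.reCLM (Complex.Gamma (Complex.ofRealCLM y)) := by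
    ext y
    simp [Complex.Gamma_ofReal]
  rw [h]
  exact Complex.reCLM.analyticAt _ |>.comp <|
    (Complex.analyticAt_Gamma hx').restrictScalars.comp (Complex.ofRealCLM.analyticAt x)

theorem Real.analyticAt_Gamma_of_pos {x : ℝ} (hx : 0 < x) : AnalyticAt ℝ Gamma x :=
  analyticAt_Gamma fun m => ((neg_nonpos.mpr m.cast_nonneg).trans_lt hx).ne'

theorem Real.Gamma_one_half_add_mul_Gamma_one_half_sub (x : ℝ) :
    Gamma (1 / 2 + x) * Gamma (1 / 2 - x) = π / cos (π * x) := by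
  have h := Gamma_mul_Gamma_one_sub (1 / 2 + x)
  rwa [show 1 - (1 / 2 + x) = 1 / 2 - x by ring, show π * (1 / 2 + x) = π * x + π / 2 by ring,
    sin_add_pi_div_two] at h

theorem tendsto_sub_div_sq_of_deriv_eq_zero {f : ℝ → ℝ} {a : ℝ} (hf : AnalyticAt ℝ f a)
    (hfa : deriv f a = 0) :
    Tendsto (fun x => (f x - f a) / (x - a) ^ 2) (𝓝[≠] a) (𝓝 (deriv (deriv f) a / 2)) := by
  have hslope := hasDerivAt_iff_tendsto_slope.mp hf.deriv.differentiableAt.hasDerivAt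
  refine HasDerivAt.lhopital_zero_nhdsNE (f' := deriv f) (g' := fun x => 2 * (x - a))
    ?_ ?_ ?_ ?_ ?_ ?_
  · filter_upwards [nhdsWithin_le_nhds hf.eventually_analyticAt] with x hx
    exact hx.differentiableAt.hasDerivAt.sub_const _
  · refine Eventually.of_forall fun x => ?_
    simpa using ((hasDerivAt_id x).sub_const a).fun_pow 2
  · filter_upwards [self_mem_nhdsWithin] with x hx
    simpa [sub_eq_zero] using hx
  · simpa using (hf.continuousAt.tendsto.sub_const (f a)).mono_left nhdsWithin_le_nhds
  · simpa using ((continuous_sub_right a).fun_pow 2).tendsto a |>.mono_left nhdsWithin_le_nhds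
  · refine (hslope.div_const 2).congr' ?_
    filter_upwards [self_mem_nhdsWithin] with x hx
    rw [slope_def_field, hfa, sub_zero, div_div, mul_comm]

theorem tendsto_mul_comp_neg_sub_one_div_sq {g : ℝ → ℝ} {L : ℝ}
    (hg : Tendsto (fun x => (g x - 1) / x ^ 2) (𝓝[≠] 0) (𝓝 L)) :
    Tendsto (fun x => (g x * g (-x) - 1) / x ^ 2) (𝓝[≠] 0) (𝓝 (2 * L)) := by
  have hneg : Tendsto Neg.neg (𝓝[≠] (0 : ℝ)) (𝓝[≠] 0) := by
    refine tendsto_nhdsWithin_iff.mpr ⟨?_, eventually_nhdsWithin_of_forall fun x hx => ?_⟩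
    · simpa using (continuous_neg.tendsto (0 : ℝ)).mono_left nhdsWithin_le_nhds
    · exact neg_ne_zero.mpr hx
  have hg' : Tendsto (fun x => (g (-x) - 1) / x ^ 2) (𝓝[≠] 0) (𝓝 L) := by
    simpa [Function.comp_def] using hg.comp hneg
  have hsq : Tendsto (fun x : ℝ => x ^ 2) (𝓝[≠] 0) (𝓝 0) := by
    simpa using ((continuous_pow 2).tendsto (0 : ℝ)).mono_left nhdsWithin_le_nhds
  have h := (hg.add hg').add ((hsq.mul hg).mul hg')
  rw [zero_mul, zero_mul, add_zero, ← two_mul] at h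
  refine h.congr' ?_
  filter_upwards [self_mem_nhdsWithin] with x hx
  field_simp
  ring

theorem tendsto_cos_sq_half_div_cos_sub_one_div_sq :
    Tendsto (fun p => (cos (π * p / 2) ^ 2 / cos (π * p) - 1) / p ^ 2) (𝓝[≠] 0)
      (𝓝 (π ^ 2 / 4)) := by
  have hcont : ContinuousAt (fun p => (π / 2) ^ 2 * sinc (π * p / 2) ^ 2 / cos (π * p)) 0 :=
    by fun_prop (disch := simp)
  have h := hcont.tendsto.mono_left (nhdsWithin_le_nhds (a := 0) (s := {0}ᶜ))
  norm_num [div_pow] at h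
  refine h.congr' ?_
  have hcos : ∀ᶠ p in 𝓝[≠] (0 : ℝ), cos (π * p) ≠ 0 :=
    nhdsWithin_le_nhds <| (continuous_cos.comp (continuous_const.mul continuous_id)).continuousAt
      |>.eventually_ne (by simp)
  filter_upwards [self_mem_nhdsWithin, hcos] with p hp hc
  obtain ⟨x, rfl⟩ : ∃ x, p = 2 * x / π := ⟨π * p / 2, by field_simp⟩
  have hx0 : x ≠ 0 := by rintro rfl; simp at hp
  have hhalf : π * (2 * x / π) / 2 = x := by field_simp
  have hfull : π * (2 * x / π) = 2 * x := by field_simp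
  rw [hfull, cos_two_mul] at hc
  rw [hhalf, hfull, cos_two_mul, sinc_of_ne_zero hx0, div_pow, sin_sq, div_sub_one hc]
  field_simp
  ring

noncomputable def gammaRatio (p : ℝ) : ℝ :=
  Gamma (1 / 2) * Gamma (p + 1 / 2) / Gamma ((p + 1) / 2) ^ 2

theorem analyticAt_gammaRatio {p : ℝ} (hp : -(1 / 2) < p) : AnalyticAt ℝ gammaRatio p := by
  have hΓ₁ : AnalyticAt ℝ (fun p : ℝ => Gamma (p + 1 / 2)) p :=
    (analyticAt_Gamma_of_pos (by linarith)).comp (by fun_prop)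
  have hΓ₂ : AnalyticAt ℝ (fun p : ℝ => Gamma ((p + 1) / 2)) p :=
    (analyticAt_Gamma_of_pos (by linarith)).comp (by fun_prop)
  exact (analyticAt_const.mul hΓ₁).div (hΓ₂.pow 2)
    (pow_ne_zero 2 (Gamma_pos_of_pos (by linarith)).ne')

theorem gammaRatio_zero : gammaRatio 0 = 1 := by
  rw [gammaRatio, zero_add, zero_add, ← sq]
  exact div_self (pow_ne_zero 2 (Gamma_pos_of_pos (by norm_num)).ne')

theorem hasDerivAt_gammaRatio_zero : HasDerivAt gammaRatio 0 0 := by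
  set d := deriv Gamma (1 / 2)
  have hΓ : HasDerivAt Gamma d (1 / 2) :=
    (analyticAt_Gamma_of_pos (by norm_num)).differentiableAt.hasDerivAt
  have hnum : HasDerivAt (fun p : ℝ => Gamma (1 / 2) * Gamma (p + 1 / 2)) (Gamma (1 / 2) * d) 0 :=
    (HasDerivAt.comp_add_const (0 : ℝ) (1 / 2) (by rwa [zero_add])).const_mul _
  have hden : HasDerivAt (fun p : ℝ => Gamma ((p + 1) / 2) ^ 2) (Gamma (1 / 2) * d) 0 := by
    have hin : HasDerivAt (fun p : ℝ => (p + 1) / 2) (1 / 2) 0 :=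
      ((hasDerivAt_id 0).add_const 1).div_const 2
    refine ((hΓ.comp_of_eq 0 hin (by norm_num)).fun_pow 2).congr_deriv ?_
    norm_num
    ring
  -- numerator and denominator agree at `0` to first order
  refine (hnum.div hden (pow_ne_zero 2 (Gamma_pos_of_pos (by norm_num)).ne')).congr_deriv ?_
  norm_num
  exact Or.inl (by ring)

theorem gammaRatio_mul_gammaRatio_neg (p : ℝ) :
    gammaRatio p * gammaRatio (-p) = cos (π * p / 2) ^ 2 / cos (π * p) := by
  have hΓ : Gamma (1 / 2) ^ 2 = π := by rw [Gamma_one_half_eq, sq_sqrt pi_pos.le]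
  have hsplit : gammaRatio p * gammaRatio (-p) = Gamma (1 / 2) ^ 2 *
      (Gamma (1 / 2 + p) * Gamma (1 / 2 - p)) /
        (Gamma (1 / 2 + p / 2) * Gamma (1 / 2 - p / 2)) ^ 2 := by
    rw [gammaRatio, gammaRatio, show (p + 1) / 2 = 1 / 2 + p / 2 by ring,
      show (-p + 1) / 2 = 1 / 2 - p / 2 by ring, add_comm p, neg_add_eq_sub]
    ring
  rw [hsplit, hΓ, Gamma_one_half_add_mul_Gamma_one_half_sub,
    Gamma_one_half_add_mul_Gamma_one_half_sub, div_pow, div_eq_mul_inv _ (π ^ 2 / _), inv_div]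
  field_simp

theorem tendsto_gammaRatio_sub_one_div_sq :
    Tendsto (fun p => (gammaRatio p - 1) / p ^ 2) (𝓝[≠] 0) (𝓝 (π ^ 2 / 8)) := by
  set c := deriv (deriv gammaRatio) 0
  have htaylor : Tendsto (fun p => (gammaRatio p - 1) / p ^ 2) (𝓝[≠] 0) (𝓝 (c / 2)) := by
    simpa [gammaRatio_zero] using tendsto_sub_div_sq_of_deriv_eq_zero
      (analyticAt_gammaRatio (by norm_num)) hasDerivAt_gammaRatio_zero.deriv
  have hsym := tendsto_mul_comp_neg_sub_one_div_sq htaylor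
  simp_rw [gammaRatio_mul_gammaRatio_neg] at hsym
  have hc : 2 * (c / 2) = π ^ 2 / 4 :=
    tendsto_nhds_unique hsym tendsto_cos_sq_half_div_cos_sub_one_div_sq
  rwa [show c / 2 = π ^ 2 / 8 by linarith] at htaylor

theorem aP_eq_inv_sqrt {p : ℝ} (hp : -1 < p) (hp₀ : p ≠ 0) :
    aP p = (√(2 * ((gammaRatio p - 1) / p ^ 2)))⁻¹ := by
  have hΓ : 0 < Gamma ((p + 1) / 2) := Gamma_pos_of_pos (by linarith)
  have hrad : Gamma (1 / 2) * Gamma (p + 1 / 2) - Gamma ((p + 1) / 2) ^ 2 =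
      Gamma ((p + 1) / 2) ^ 2 * (gammaRatio p - 1) := by
    rw [gammaRatio]
    field_simp
  rw [aP, if_neg hp₀, hrad, sqrt_mul (sq_nonneg _), sqrt_sq hΓ.le, sqrt_mul zero_le_two,
    sqrt_div' _ (sq_nonneg p), sqrt_sq_eq_abs, ← mul_div_assoc, inv_div, mul_left_comm,
    mul_comm |p|, mul_div_mul_left _ _ hΓ.ne']

/-- As `p → 0` through nonzero values, `a_p → 2/π`; i.e. `p ↦ a_p` extends continuously
to `p = 0` with value `a_0 = 2/π`. -/
theorem stmt1 :
    Filter.Tendsto aP (nhdsWithin 0 {(0 : ℝ)}ᶜ) (nhds (2 / Real.pi)) ∧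
    aP 0 = 2 / Real.pi := by
  refine ⟨?_, if_pos rfl⟩
  have hval : (√(2 * (π ^ 2 / 8)))⁻¹ = 2 / π := by
    rw [show 2 * (π ^ 2 / 8) = (π / 2) ^ 2 by ring, sqrt_sq (by positivity), inv_div]
  have hlim := ((tendsto_gammaRatio_sub_one_div_sq.const_mul 2).sqrt).inv₀ (by positivity)
  rw [hval] at hlim
  refine hlim.congr' ?_
  filter_upwards [self_mem_nhdsWithin, nhdsWithin_le_nhds (Ioi_mem_nhds neg_one_lt_zero)]
    with p hp₀ hp
  exact (aP_eq_inv_sqrt hp hp₀).symm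
end

section
/- One has a_p → 0 as p → -1/2 from the right, and a_p → 0 as p → ∞. -/
/-!
Near `p = -1/2` the factor `Γ(p + 1/2)` in the denominator of `a_p` runs into the pole of `Γ`
at `0`, while the numerator stays bounded. For large `p`, Legendre's duplication formula and the
monotonicity of `Γ` on `[2, ∞)` give `Γ((p+1)/2)² ≤ √π · p 2^(-p) · Γ(p + 1/2)`, so the
subtracted square is negligible in the denominator and `a_p ≤ p √(p 2^(-p))`.
-/

open Real Set Filter Topology

lemma continuousAt_Gamma_of_pos {s : ℝ} (hs : 0 < s) : ContinuousAt Gamma s :=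
  (differentiableOn_Gamma_Ioi.differentiableAt (Ioi_mem_nhds hs)).continuousAt

lemma tendsto_Gamma_nhdsGT_zero : Tendsto Gamma (𝓝[>] 0) atTop := by
  have hshift : Tendsto (fun s : ℝ => Gamma (s + 1)) (𝓝[>] 0) (𝓝 1) := by
    have hcont : ContinuousAt (fun s : ℝ => Gamma (s + 1)) 0 :=
      (continuousAt_Gamma_of_pos (by norm_num)).comp (continuous_add_const 1).continuousAt
    simpa using hcont.tendsto.mono_left nhdsWithin_le_nhds
  refine (hshift.pos_mul_atTop one_pos tendsto_inv_nhdsGT_zero).congr' ?_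
  filter_upwards [self_mem_nhdsWithin] with s hs
  rw [Gamma_add_one (ne_of_gt hs), mul_comm s, mul_assoc, mul_inv_cancel₀ (ne_of_gt hs), mul_one]

lemma tendsto_aP_nhdsGT_neg_half : Tendsto aP (𝓝[>] (-1 / 2)) (𝓝 0) := by
  have hGamma : Tendsto (fun p : ℝ => Gamma ((p + 1) / 2)) (𝓝[>] (-1 / 2))
      (𝓝 (Gamma ((-1 / 2 + 1) / 2))) := by
    have hcont : ContinuousAt (fun p : ℝ => Gamma ((p + 1) / 2)) (-1 / 2) :=
      (continuousAt_Gamma_of_pos (by norm_num)).comp (by fun_prop)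
    exact hcont.tendsto.mono_left nhdsWithin_le_nhds
  have hnum := ((continuous_abs.tendsto (-1 / 2 : ℝ)).mono_left nhdsWithin_le_nhds).mul hGamma
  have hpole : Tendsto (fun p : ℝ => Gamma (p + 1 / 2)) (𝓝[>] (-1 / 2)) atTop := by
    refine tendsto_Gamma_nhdsGT_zero.comp (tendsto_nhdsWithin_of_tendsto_nhds_of_eventually_within
      _ ?_ ?_)
    · have h := ((continuous_add_const (1 / 2 : ℝ)).tendsto (-1 / 2)).mono_left
        (nhdsWithin_le_nhds (s := Ioi (-1 / 2)))
      norm_num at h ⊢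
      exact h
    · filter_upwards [self_mem_nhdsWithin] with p (hp : -1 / 2 < p)
      exact show (0 : ℝ) < p + 1 / 2 by linarith
  have hinner : Tendsto (fun p : ℝ =>
      Gamma (1 / 2) * Gamma (p + 1 / 2) - Gamma ((p + 1) / 2) ^ 2) (𝓝[>] (-1 / 2)) atTop := by
    simpa only [sub_eq_add_neg] using
      (hpole.const_mul_atTop (Gamma_pos_of_pos one_half_pos)).atTop_add (hGamma.pow 2).neg
  have hden := (tendsto_sqrt_atTop.comp hinner).const_mul_atTop (sqrt_pos.2 two_pos)
  refine (hnum.div_atTop hden).congr' ?_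
  filter_upwards [eventually_nhdsWithin_of_eventually_nhds
    (eventually_ne_nhds (by norm_num : (-1 / 2 : ℝ) ≠ 0))] with p hp
  simp [aP, hp]

lemma Gamma_sq_le {p : ℝ} (hp : 3 ≤ p) :
    Gamma ((p + 1) / 2) ^ 2 ≤ √π * (p * 2 ^ (-p)) * Gamma (p + 1 / 2) := by
  have hmono := Gamma_strictMonoOn_Ici.monotoneOn
  have hdup := Gamma_mul_Gamma_add_half ((p + 1) / 2)
  rw [show 2 * ((p + 1) / 2) = p + 1 by ring, show 1 - (p + 1) = -p by ring] at hdup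
  calc Gamma ((p + 1) / 2) ^ 2 ≤ Gamma ((p + 1) / 2) * Gamma ((p + 1) / 2 + 1 / 2) := by
        rw [sq]
        have hA : 0 < Gamma ((p + 1) / 2) := Gamma_pos_of_pos (by linarith)
        gcongr
        exact hmono (by simp; linarith) (by simp; linarith) (by linarith)
    _ = √π * (p * 2 ^ (-p)) * Gamma p := by
        rw [hdup, Gamma_add_one (by linarith)]; ring
    _ ≤ √π * (p * 2 ^ (-p)) * Gamma (p + 1 / 2) := by
        gcongr
        exact hmono (by simp; linarith) (by simp; linarith) (by linarith)

/-- The hypothesis makes the radicand of `a_p` at least `Γ((p+1)/2)² / (2ε)`. -/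
lemma aP_le_mul_sqrt {p ε : ℝ} (hp : 0 < p) (hε : ε ≤ 1 / 2)
    (h : Gamma ((p + 1) / 2) ^ 2 ≤ √π * ε * Gamma (p + 1 / 2)) : aP p ≤ p * √ε := by
  set A := Gamma ((p + 1) / 2)
  set B := Gamma (p + 1 / 2)
  have hA : 0 < A := Gamma_pos_of_pos (by linarith)
  have hB : 0 < B := Gamma_pos_of_pos (by linarith)
  have hπ : 0 < √π := sqrt_pos.2 pi_pos
  have hε0 : 0 < ε := by
    by_contra! hε0
    nlinarith [mul_nonpos_of_nonneg_of_nonpos (mul_pos hπ hB).le hε0, sq_pos_of_pos hA]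
  have hD : 0 < √π * B - A ^ 2 := by nlinarith [mul_pos hπ hB]
  have hratio : A ^ 2 ≤ ε * (2 * (√π * B - A ^ 2)) := by nlinarith [mul_pos hπ hB]
  rw [aP, if_neg hp.ne', abs_of_pos hp, Gamma_one_half_eq, mul_div_assoc, ← sqrt_mul zero_le_two]
  gcongr
  rw [div_le_iff₀ (sqrt_pos.2 (by positivity)), ← sqrt_mul hε0.le]
  exact le_sqrt_of_sq_le hratio

lemma tendsto_pow_mul_two_rpow_neg_atTop (n : ℕ) :
    Tendsto (fun p : ℝ => p ^ n * 2 ^ (-p)) atTop (𝓝 0) := by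
  refine (tendsto_rpow_mul_exp_neg_mul_atTop_nhds_zero n (log 2) (log_pos one_lt_two)).congr
    fun p => ?_
  rw [rpow_natCast, rpow_def_of_pos two_pos, mul_neg, neg_mul]

lemma tendsto_aP_atTop : Tendsto aP atTop (𝓝 0) := by
  have hpow_small := tendsto_pow_mul_two_rpow_neg_atTop 1
  simp only [pow_one] at hpow_small
  have hbound : Tendsto (fun p : ℝ => p * √(p * 2 ^ (-p))) atTop (𝓝 0) := by
    refine ((continuous_sqrt.tendsto 0).comp (tendsto_pow_mul_two_rpow_neg_atTop 3)).congr' ?_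
      |>.trans (by simp)
    filter_upwards [eventually_ge_atTop 0] with p hp
    rw [Function.comp_apply, show p ^ 3 * 2 ^ (-p) = p ^ 2 * (p * 2 ^ (-p)) by ring,
      sqrt_mul (by positivity), sqrt_sq hp]
  refine squeeze_zero' ?_ ?_ hbound
  · filter_upwards [eventually_gt_atTop 0] with p hp
    rw [aP, if_neg hp.ne']
    positivity
  · filter_upwards [eventually_ge_atTop 3, hpow_small.eventually (ge_mem_nhds one_half_pos)]
      with p hp hε
    exact aP_le_mul_sqrt (by linarith) hε (Gamma_sq_le hp)

/-- `a_p → 0` as `p → -1/2` from the right, and `a_p → 0` as `p → ∞`. -/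
theorem stmt2 :
    Filter.Tendsto aP (nhdsWithin (-1 / 2 : ℝ) (Set.Ioi (-1 / 2 : ℝ))) (nhds 0) ∧
    Filter.Tendsto aP Filter.atTop (nhds 0) :=
  ⟨tendsto_aP_nhdsGT_neg_half, tendsto_aP_atTop⟩
end

section
/- For each p ∈ (0,∞), the function s ↦ λ_p(s) is even, continuous on ℝ, and strictly increasing on [0,∞); for each p ∈ (-1,0), the function s ↦ λ_p(s) is even, continuous on ℝ, and strictly decreasing on [0,∞). -/
/-!
Shifting the variable, `λ_p(s) = ∫ φ(x - s) |x|^p dx`, so `s` only enters through the Gaussian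
density and can be differentiated under the integral sign: `|x - t| φ(x - t) ≤ C e^{-x²/8}`
uniformly for `t` near `s`, which also gives continuity. Substituting `x = u + s` and pairing
`u` with `-u`, the derivative becomes `½ ∫ u φ(u) (|u + s|^p - |u - s|^p) du`; for `s > 0` the
factor `|u + s|^p - |u - s|^p` has the sign of `p u`, so the derivative has the sign of `p`.
Evenness holds because `x ↦ -x` maps `N(s, 1)` to `N(-s, 1)` and preserves `|x|^p`.
-/

open MeasureTheory ProbabilityTheory Real Set

/-- The standard Gaussian measure `N(0,1)` on `ℝ`. -/
noncomputable def γ : Measure ℝ := gaussianReal 0 1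

/-- `λ_p(s) = E|Z+s|^p` for a standard normal `Z`. -/
noncomputable def lam (p s : ℝ) : ℝ := ∫ z, |z + s| ^ p ∂γ

open Filter
open scoped NNReal

lemma integral_pos_of_ae_pos {α : Type*} [MeasurableSpace α] {μ : Measure α} [NeZero μ]
    {f : α → ℝ} (hfi : Integrable f μ) (hf : ∀ᵐ x ∂μ, 0 < f x) : 0 < ∫ x, f x ∂μ := by
  have hsupp : Function.support f =ᵐ[μ] univ :=
    ae_eq_univ.2 (ae_iff.1 (hf.mono fun _ hx => hx.ne'))
  rw [integral_pos_iff_support_of_nonneg_ae (hf.mono fun _ hx => hx.le) hfi, measure_congr hsupp]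
  exact NeZero.pos _

lemma integrable_abs_rpow_mul_exp_neg_mul_sq {b : ℝ} (hb : 0 < b) {s : ℝ} (hs : -1 < s) :
    Integrable fun x : ℝ => |x| ^ s * exp (-b * x ^ 2) := by
  have h : IntegrableOn (fun x : ℝ => |x| ^ s * exp (-b * x ^ 2)) (Ioi 0) :=
    (integrableOn_rpow_mul_exp_neg_mul_sq hb hs).congr_fun
      (fun x hx => by rw [abs_of_pos hx]) measurableSet_Ioi
  rw [← integrableOn_univ, ← Iio_union_Ici (a := (0 : ℝ)), integrableOn_union,
    integrableOn_Ici_iff_integrableOn_Ioi]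
  refine ⟨?_, h⟩
  rw [← (Measure.measurePreserving_neg (volume : Measure ℝ)).integrableOn_comp_preimage
      (Homeomorph.neg ℝ).measurableEmbedding]
  simpa only [Function.comp_def, neg_sq, abs_neg, neg_preimage, neg_Iio, neg_zero] using h

lemma mul_rpow_sub_rpow_pos {a b p : ℝ} (hb : 0 < b) (hba : b < a) (hp : p ≠ 0) :
    0 < p * (a ^ p - b ^ p) := by
  rcases hp.lt_or_gt with hp | hp
  · exact mul_pos_of_neg_of_neg hp (sub_neg.2 (rpow_lt_rpow_of_neg hb hba hp))
  · exact mul_pos hp (sub_pos.2 (rpow_lt_rpow hb.le hba hp))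

lemma mul_mul_abs_add_rpow_sub_pos {p s u : ℝ} (hp : p ≠ 0) (hs : 0 < s)
    (hu : u ≠ 0) (hus : u ≠ s) (hus' : u ≠ -s) :
    0 < p * u * (|u + s| ^ p - |u - s| ^ p) := by
  rcases hu.lt_or_gt with hu | hu
  · have hlt : |u + s| < |u - s| := by
      rw [abs_of_neg (by linarith : u - s < 0)]
      exact abs_lt.2 ⟨by linarith, by linarith⟩
    have := mul_rpow_sub_rpow_pos (abs_pos.2 fun h => hus' (eq_neg_of_add_eq_zero_left h)) hlt hp
    nlinarith
  · have hlt : |u - s| < |u + s| := by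
      rw [abs_of_pos (by linarith : 0 < u + s)]
      exact abs_lt.2 ⟨by linarith, by linarith⟩
    have := mul_rpow_sub_rpow_pos (abs_pos.2 (sub_ne_zero.2 hus)) hlt hp
    nlinarith

lemma hasDerivAt_gaussianPDFReal_mean (μ : ℝ) (v : ℝ≥0) (x : ℝ) :
    HasDerivAt (fun m => gaussianPDFReal m v x) ((x - μ) / v * gaussianPDFReal μ v x) μ := by
  have h1 : HasDerivAt (fun m => -(x - m) ^ 2 / (2 * v)) ((x - μ) / v) μ := by
    rw [← mul_div_mul_left (x - μ) (v : ℝ) two_ne_zero]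
    refine ((((hasDerivAt_id μ).const_sub x).fun_pow 2).neg.div_const _).congr_deriv ?_
    simp
  refine (h1.exp.const_mul (√(2 * π * v))⁻¹).congr_deriv ?_
  unfold gaussianPDFReal; ring

lemma one_add_abs_sub_mul_gaussianPDFReal_le (μ x : ℝ) :
    (1 + |x - μ|) * gaussianPDFReal μ 1 x ≤ 2 * exp (μ ^ 2 / 4) * exp (-(1 / 8) * x ^ 2) := by
  set y := x - μ
  have hc : (√(2 * π))⁻¹ ≤ 1 :=
    inv_le_one_of_one_le₀ (one_le_sqrt.2 (by linarith [two_le_pi]))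
  have hy : 1 + |y| ≤ 2 * exp (y ^ 2 / 4) := by
    nlinarith [add_one_le_exp (y ^ 2 / 4), sq_abs y, sq_nonneg (|y| - 1)]
  have hsq : -y ^ 2 / 4 ≤ μ ^ 2 / 4 - 1 / 8 * x ^ 2 := by
    nlinarith [sq_nonneg (x - 2 * μ)]
  calc (1 + |y|) * gaussianPDFReal μ 1 x
      ≤ 2 * exp (y ^ 2 / 4) * exp (-y ^ 2 / 2) := by
        rw [gaussianPDFReal, NNReal.coe_one, mul_one, mul_one]
        exact mul_le_mul hy (mul_le_of_le_one_left (exp_pos _).le hc)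
          (by positivity) (by positivity)
    _ = 2 * exp (-y ^ 2 / 4) := by rw [mul_assoc, ← exp_add]; ring_nf
    _ ≤ 2 * exp (μ ^ 2 / 4) * exp (-(1 / 8) * x ^ 2) := by
        rw [mul_assoc, ← exp_add]; gcongr; linarith

lemma lam_eq_integral_gaussianReal (p s : ℝ) : lam p s = ∫ x, |x| ^ p ∂gaussianReal s 1 := by
  rw [← zero_add s, ← gaussianReal_map_add_const, integral_map (by fun_prop)
    (by fun_prop : Measurable fun x : ℝ => |x| ^ p).aestronglyMeasurable, zero_add]
  rfl

lemma lam_neg (p s : ℝ) : lam p (-s) = lam p s := by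
  rw [lam_eq_integral_gaussianReal, ← gaussianReal_map_neg, integral_map (by fun_prop)
    (by fun_prop : Measurable fun x : ℝ => |x| ^ p).aestronglyMeasurable,
    lam_eq_integral_gaussianReal]
  simp only [abs_neg]

lemma lam_eq_integral_gaussianPDFReal (p s : ℝ) :
    lam p s = ∫ x, gaussianPDFReal s 1 x * |x| ^ p := by
  rw [lam_eq_integral_gaussianReal, integral_gaussianReal_eq_integral_smul one_ne_zero]
  rfl

lemma hasDerivAt_lam {p : ℝ} (hp : -1 < p) (s : ℝ) :
    Integrable (fun x => (x - s) * gaussianPDFReal s 1 x * |x| ^ p) ∧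
      HasDerivAt (lam p) (∫ x, (x - s) * gaussianPDFReal s 1 x * |x| ^ p) s := by
  set bound := fun x : ℝ => 2 * exp ((|s| + 1) ^ 2 / 4) * (|x| ^ p * exp (-(1 / 8) * x ^ 2))
  have hbound : Integrable bound :=
    (integrable_abs_rpow_mul_exp_neg_mul_sq (by norm_num) hp).const_mul _
  have hdom : ∀ x, ∀ t ∈ Metric.ball s 1, ∀ a, |a| ≤ 1 + |x - t| →
      ‖a * gaussianPDFReal t 1 x * |x| ^ p‖ ≤ bound x := by
    intro x t ht a ha
    have ht : t ^ 2 ≤ (|s| + 1) ^ 2 := by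
      rw [Metric.mem_ball, dist_eq] at ht
      exact sq_le_sq' (by linarith [abs_le.1 ht.le, neg_abs_le s])
        (by linarith [abs_le.1 ht.le, le_abs_self s])
    have hφ := gaussianPDFReal_nonneg t 1 x
    calc ‖a * gaussianPDFReal t 1 x * |x| ^ p‖
        = |a| * gaussianPDFReal t 1 x * |x| ^ p := by
          simp only [norm_mul, norm_eq_abs, abs_of_nonneg hφ,
            abs_of_nonneg (rpow_nonneg (abs_nonneg x) p)]
      _ ≤ 2 * exp (t ^ 2 / 4) * exp (-(1 / 8) * x ^ 2) * |x| ^ p :=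
          mul_le_mul_of_nonneg_right ((mul_le_mul_of_nonneg_right ha hφ).trans
            (one_add_abs_sub_mul_gaussianPDFReal_le t x)) (rpow_nonneg (abs_nonneg x) p)
      _ ≤ 2 * exp ((|s| + 1) ^ 2 / 4) * (|x| ^ p * exp (-(1 / 8) * x ^ 2)) := by
          rw [mul_right_comm, mul_assoc _ (|x| ^ p)]
          gcongr
  have hF : Integrable fun x => gaussianPDFReal s 1 x * |x| ^ p :=
    hbound.mono' (by fun_prop) (ae_of_all _ fun x => by
      simpa using hdom x s (Metric.mem_ball_self one_pos) 1 (by simp))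
  rw [funext (lam_eq_integral_gaussianPDFReal p)]
  exact hasDerivAt_integral_of_dominated_loc_of_deriv_le (Metric.ball_mem_nhds s one_pos)
    (F' := fun t x => (x - t) * gaussianPDFReal t 1 x * |x| ^ p)
    (Eventually.of_forall fun t => by fun_prop) hF (by fun_prop)
    (ae_of_all _ fun x t ht => hdom x t ht _ (by linarith [abs_nonneg (x - t)])) hbound
    (ae_of_all _ fun x t _ => by
      simpa using (hasDerivAt_gaussianPDFReal_mean t 1 x).mul_const (|x| ^ p))

lemma mul_deriv_lam_pos {p : ℝ} (hp : -1 < p) (hp0 : p ≠ 0) {s : ℝ} (hs : 0 < s) :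
    0 < p * deriv (lam p) s := by
  rw [(hasDerivAt_lam hp s).2.deriv]
  set h := fun u : ℝ => u * gaussianPDFReal 0 1 u * |u + s| ^ p
  have hshift : ∫ x, (x - s) * gaussianPDFReal s 1 x * |x| ^ p = ∫ u, h u := by
    rw [← integral_add_right_eq_self _ s]
    simp [h, gaussianPDFReal_add]
  have hint : Integrable h := by
    simpa [h, gaussianPDFReal_add] using (hasDerivAt_lam hp s).1.comp_add_right s
  have hsymm (u : ℝ) :
      h u + h (-u) = u * gaussianPDFReal 0 1 u * (|u + s| ^ p - |u - s| ^ p) := by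
    simp only [h, abs_sub_comm u s, neg_add_eq_sub]
    simp only [gaussianPDFReal, sub_zero, even_two, Even.neg_pow]
    ring
  have hfin : ∀ᵐ u : ℝ, u ∉ ({0, s, -s} : Set ℝ) :=
    measure_eq_zero_iff_ae_notMem.1 ((Set.toFinite _).measure_zero _)
  have hpos : 0 < ∫ u, p * (h u + h (-u)) := by
    refine integral_pos_of_ae_pos ((hint.add hint.comp_neg).const_mul p) ?_
    filter_upwards [hfin] with u hu
    simp only [mem_insert_iff, mem_singleton_iff, not_or] at hu
    rw [hsymm]
    have hsign := mul_mul_abs_add_rpow_sub_pos hp0 hs hu.1 hu.2.1 hu.2.2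
    have hφ := gaussianPDFReal_pos 0 1 u one_ne_zero
    nlinarith
  rw [integral_const_mul, integral_add hint hint.comp_neg, integral_neg_eq_self, ← two_mul,
    mul_left_comm] at hpos
  rw [hshift]
  exact (mul_pos_iff_of_pos_left two_pos).1 hpos

lemma continuous_lam {p : ℝ} (hp : -1 < p) : Continuous (lam p) :=
  continuous_iff_continuousAt.2 fun s => (hasDerivAt_lam hp s).2.continuousAt

theorem stmt4 :
    (∀ p : ℝ, 0 < p →
      (∀ s : ℝ, lam p (-s) = lam p s) ∧ Continuous (lam p) ∧
        StrictMonoOn (lam p) (Set.Ici 0)) ∧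
    (∀ p : ℝ, p ∈ Set.Ioo (-1 : ℝ) 0 →
      (∀ s : ℝ, lam p (-s) = lam p s) ∧ Continuous (lam p) ∧
        StrictAntiOn (lam p) (Set.Ici 0)) := by
  refine ⟨fun p hp => ?_, fun p ⟨hp1, hp0⟩ => ?_⟩
  · have hp1 : -1 < p := by linarith
    refine ⟨lam_neg p, continuous_lam hp1, ?_⟩
    refine strictMonoOn_of_deriv_pos (convex_Ici 0) (continuous_lam hp1).continuousOn
      fun s hs => ?_
    rw [interior_Ici] at hs
    exact pos_of_mul_pos_right (mul_deriv_lam_pos hp1 hp.ne' hs) hp.le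
  · refine ⟨lam_neg p, continuous_lam hp1, ?_⟩
    refine strictAntiOn_of_deriv_neg (convex_Ici 0) (continuous_lam hp1).continuousOn
      fun s hs => ?_
    rw [interior_Ici] at hs
    exact neg_of_mul_pos_right (mul_deriv_lam_pos hp1 hp0.ne hs) hp0.le
end

section
/- For each p ∈ [2,∞) and every real s one has λ_p(s) − λ_p(0) ≥ (p/2)·λ_p(0)·s², and this inequality is strict whenever p > 2 and s ≠ 0. -/
open MeasureTheory ProbabilityTheory Real Set

/-!
Tilting the Gaussian gives `λ_p(s) = e^{-s²/2} E[|Z|^p cosh(sZ)]`, and expanding `cosh` termwise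
(all terms are nonnegative) bounds this from below by
`e^{-s²/2} Σ_k s^{2k}/(2k)! · E|Z|^{p+2k}`, where `E|Z|^{q+2} = (q+1) E|Z|^q`.
Since `(1 + p s²/2) e^{s²/2} = Σ_k (1 + pk) (s²/2)^k / k!`, the claim reduces to the
coefficientwise inequality `(1 + pk) (2k)! ≤ 2^k k! ∏_{j<k} (p + 1 + 2j)`. It follows by
induction, since `(1 + p(k+1)) (2k+1) ≤ (1 + pk) (p + 1 + 2k)` amounts to `(p - 2) k ≥ 0`;
for `p > 2` the coefficients of `s⁴` already differ.
-/

theorem integral_abs_rpow_γ {q : ℝ} (hq : -1 < q) :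
    ∫ x, |x| ^ q ∂γ = 2 ^ ((q + 1) / 2) * Gamma ((q + 1) / 2) / √(2 * π) := by
  have hhalf := integral_rpow_mul_exp_neg_mul_rpow two_pos hq (one_half_pos (α := ℝ))
  have htwo : (1 / 2 : ℝ) ^ (-(q + 1) / 2) = 2 ^ ((q + 1) / 2) := by
    rw [one_div, inv_rpow zero_le_two, ← rpow_neg zero_le_two, neg_div, neg_neg]
  calc ∫ x, |x| ^ q ∂γ
      = (√(2 * π))⁻¹ * ∫ x, |x| ^ q * rexp (-(1 / 2) * |x| ^ (2 : ℝ)) := by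
        rw [γ, integral_gaussianReal_eq_integral_smul one_ne_zero, ← integral_const_mul]
        congr with x
        rw [gaussianPDFReal, rpow_two, sq_abs]
        simp only [NNReal.coe_one, mul_one, sub_zero, smul_eq_mul]
        ring_nf
    _ = 2 ^ ((q + 1) / 2) * Gamma ((q + 1) / 2) / √(2 * π) := by
        rw [integral_comp_abs (f := fun x => x ^ q * rexp (-(1 / 2) * x ^ (2 : ℝ))), hhalf, htwo]
        ring

theorem integral_abs_rpow_γ_pos {q : ℝ} (hq : -1 < q) : 0 < ∫ x, |x| ^ q ∂γ := by
  rw [integral_abs_rpow_γ hq]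
  have : 0 < Gamma ((q + 1) / 2) := Gamma_pos_of_pos (by linarith)
  positivity

theorem integral_abs_rpow_add_two_γ {q : ℝ} (hq : -1 < q) :
    ∫ x, |x| ^ (q + 2) ∂γ = (q + 1) * ∫ x, |x| ^ q ∂γ := by
  rw [integral_abs_rpow_γ hq, integral_abs_rpow_γ (by linarith),
    show (q + 2 + 1) / 2 = (q + 1) / 2 + 1 by ring, Gamma_add_one (by linarith),
    rpow_add_one two_ne_zero]
  ring

theorem integral_gaussianReal_eq_exp_mul_integral (s : ℝ) (f : ℝ → ℝ) :
    ∫ x, f x ∂gaussianReal s 1 = rexp (-s ^ 2 / 2) * ∫ x, rexp (s * x) * f x ∂γ := by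
  rw [γ, integral_gaussianReal_eq_integral_smul one_ne_zero,
    integral_gaussianReal_eq_integral_smul one_ne_zero, ← integral_const_mul]
  congr with x
  simp only [gaussianPDFReal, NNReal.coe_one, mul_one, sub_zero, smul_eq_mul]
  have : rexp (-(x - s) ^ 2 / 2) = rexp (-s ^ 2 / 2) * rexp (s * x) * rexp (-x ^ 2 / 2) := by
    rw [← exp_add, ← exp_add]; ring_nf
  rw [this]; ring

theorem integral_comp_neg_γ (f : ℝ → ℝ) : ∫ x, f (-x) ∂γ = ∫ x, f x ∂γ := by
  conv_rhs => rw [γ, ← neg_zero, ← gaussianReal_map_neg]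
  exact (integral_map_equiv (MeasurableEquiv.neg ℝ) f).symm

theorem integrable_abs_rpow_mul_exp_γ {q : ℝ} (hq : 0 ≤ q) (t : ℝ) :
    Integrable (fun x => |x| ^ q * rexp (t * x)) γ :=
  integrable_rpow_abs_mul_exp_of_mem_interior_integrableExpSet (X := id)
    (by simp [γ]) hq

theorem integrable_abs_rpow_γ {q : ℝ} (hq : 0 ≤ q) : Integrable (fun x => |x| ^ q) γ := by
  simpa using integrable_abs_rpow_mul_exp_γ hq 0

theorem integrable_abs_rpow_mul_cosh_γ {p : ℝ} (hp : 0 ≤ p) (s : ℝ) :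
    Integrable (fun x => |x| ^ p * cosh (s * x)) γ := by
  simp_rw [cosh_eq, mul_div_assoc', mul_add, ← neg_mul]
  exact ((integrable_abs_rpow_mul_exp_γ hp s).add
    (integrable_abs_rpow_mul_exp_γ hp (-s))).div_const 2

theorem lam_eq_exp_mul_integral_cosh {p : ℝ} (hp : 0 ≤ p) (s : ℝ) :
    lam p s = rexp (-s ^ 2 / 2) * ∫ x, |x| ^ p * cosh (s * x) ∂γ := by
  have hshift : lam p s = ∫ x, |x| ^ p ∂gaussianReal s 1 := by
    rw [lam, γ, ← zero_add s, ← gaussianReal_map_add_const, zero_add,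
      integral_map (by fun_prop) (by fun_prop)]
  have hsymm : ∫ x, |x| ^ p * rexp (s * x) ∂γ = ∫ x, |x| ^ p * rexp (-s * x) ∂γ := by
    rw [← integral_comp_neg_γ]; simp only [abs_neg, mul_neg, neg_mul]
  have hcosh : ∫ x, |x| ^ p * cosh (s * x) ∂γ = ∫ x, |x| ^ p * rexp (s * x) ∂γ := by
    simp_rw [cosh_eq, mul_div_assoc', mul_add, integral_div, ← neg_mul]
    rw [integral_add (integrable_abs_rpow_mul_exp_γ hp s) (integrable_abs_rpow_mul_exp_γ hp (-s)),
      ← hsymm]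
    ring
  rw [hshift, integral_gaussianReal_eq_exp_mul_integral, hcosh]
  simp_rw [mul_comm (rexp _)]

theorem abs_rpow_add_two_mul (x : ℝ) {p : ℝ} (hp : 0 ≤ p) (k : ℕ) :
    |x| ^ (p + 2 * k) = |x| ^ p * x ^ (2 * k) := by
  rw [rpow_add_of_nonneg (abs_nonneg x) hp (by positivity), ← Nat.cast_ofNat, ← Nat.cast_mul,
    rpow_natCast, pow_mul, pow_mul, sq_abs]

theorem sum_range_le_integral_abs_rpow_mul_cosh {p : ℝ} (hp : 0 ≤ p) (s : ℝ) (N : ℕ) :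
    ∑ k ∈ Finset.range N, s ^ (2 * k) / (2 * k).factorial * ∫ x, |x| ^ (p + 2 * k) ∂γ
      ≤ ∫ x, |x| ^ p * cosh (s * x) ∂γ := by
  have hterm (k : ℕ) :
      Integrable (fun x => s ^ (2 * k) / (2 * k).factorial * |x| ^ (p + 2 * k)) γ :=
    (integrable_abs_rpow_γ (by positivity)).const_mul _
  simp_rw [← integral_const_mul]
  rw [← integral_finsetSum _ fun k _ => hterm k]
  refine integral_mono (integrable_finsetSum _ fun k _ => hterm k)
    (integrable_abs_rpow_mul_cosh_γ hp s) fun x => ?_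
  have hcosh := sum_le_hasSum (Finset.range N)
    (fun k _ => div_nonneg ((even_two_mul k).pow_nonneg _) (Nat.cast_nonneg _))
    (hasSum_cosh (s * x))
  calc ∑ k ∈ Finset.range N, s ^ (2 * k) / (2 * k).factorial * |x| ^ (p + 2 * k)
      = |x| ^ p * ∑ k ∈ Finset.range N, (s * x) ^ (2 * k) / (2 * k).factorial := by
        rw [Finset.mul_sum]
        refine Finset.sum_congr rfl fun k _ => ?_
        rw [abs_rpow_add_two_mul x hp, mul_pow]
        ring
    _ ≤ |x| ^ p * cosh (s * x) := mul_le_mul_of_nonneg_left hcosh (by positivity)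

theorem hasSum_one_add_mul_mul_pow_div_factorial (p x : ℝ) :
    HasSum (fun k : ℕ => (1 + p * k) * x ^ k / k.factorial) ((1 + p * x) * rexp x) := by
  have hexp : HasSum (fun k : ℕ => x ^ k / k.factorial) (rexp x) := by
    simpa [exp_eq_exp_ℝ] using NormedSpace.expSeries_div_hasSum_exp x
  have hmul : HasSum (fun k : ℕ => k * x ^ k / k.factorial) (x * rexp x) := by
    have hshift : (fun k : ℕ => ((k + 1 : ℕ) : ℝ) * x ^ (k + 1) / (k + 1).factorial)
        = fun k => x * (x ^ k / k.factorial) := by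
      funext k
      rw [Nat.factorial_succ]
      push_cast
      field_simp
      ring
    rw [← hasSum_nat_add_iff' 1, hshift]
    simpa using hexp.mul_left x
  convert hexp.add (hmul.mul_left p) using 1
  · ext k; ring
  · ring

theorem one_add_mul_mul_factorial_le {p : ℝ} (hp : 2 ≤ p) {m : ℕ → ℝ} (h0 : 0 ≤ m 0)
    (hm : ∀ k : ℕ, m (k + 1) = (p + 1 + 2 * k) * m k) (k : ℕ) :
    (1 + p * k) * (2 * k).factorial * m 0 ≤ 2 ^ k * k.factorial * m k := by
  induction k with
  | zero => simp
  | succ k ih =>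
    have hstep : (1 + p * (k + 1)) * (2 * k + 1) ≤ (1 + p * k) * (p + 1 + 2 * k) := by
      nlinarith [mul_nonneg (sub_nonneg.2 hp) (Nat.cast_nonneg (α := ℝ) k)]
    have hfac :
        ((2 * (k + 1)).factorial : ℝ) = (2 * k + 2) * (2 * k + 1) * (2 * k).factorial := by
      rw [show 2 * (k + 1) = 2 * k + 1 + 1 by ring, Nat.factorial_succ, Nat.factorial_succ]
      push_cast; ring
    have hpos : (0 : ℝ) ≤ (2 * k + 2) * (2 * k).factorial * m 0 := by positivity
    calc (1 + p * ↑(k + 1)) * ((2 * (k + 1)).factorial : ℝ) * m 0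
        = (1 + p * (k + 1)) * (2 * k + 1) * ((2 * k + 2) * (2 * k).factorial * m 0) := by
          rw [hfac]; push_cast; ring
      _ ≤ (1 + p * k) * (p + 1 + 2 * k) * ((2 * k + 2) * (2 * k).factorial * m 0) :=
          mul_le_mul_of_nonneg_right hstep hpos
      _ = (p + 1 + 2 * k) * (2 * k + 2) * ((1 + p * k) * (2 * k).factorial * m 0) := by ring
      _ ≤ (p + 1 + 2 * k) * (2 * k + 2) * (2 ^ k * k.factorial * m k) :=
          mul_le_mul_of_nonneg_left ih (by positivity)
      _ = 2 ^ (k + 1) * ((k + 1).factorial : ℝ) * m (k + 1) := by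
          rw [hm, Nat.factorial_succ]; push_cast; ring

theorem mul_one_add_mul_mul_exp_le {p : ℝ} (hp : 2 ≤ p) {m : ℕ → ℝ} (h0 : 0 ≤ m 0)
    (hm : ∀ k : ℕ, m (k + 1) = (p + 1 + 2 * k) * m k) {s I : ℝ}
    (hI : ∀ N, ∑ k ∈ Finset.range N, s ^ (2 * k) / (2 * k).factorial * m k ≤ I) :
    m 0 * ((1 + p * (s ^ 2 / 2)) * rexp (s ^ 2 / 2)) ≤ I ∧
      (2 < p → 0 < m 0 → s ≠ 0 → m 0 * ((1 + p * (s ^ 2 / 2)) * rexp (s ^ 2 / 2)) < I) := by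
  set a : ℕ → ℝ := fun k => m 0 * ((1 + p * k) * (s ^ 2 / 2) ^ k / k.factorial)
  set b : ℕ → ℝ := fun k => s ^ (2 * k) / (2 * k).factorial * m k
  have ha : HasSum a (m 0 * ((1 + p * (s ^ 2 / 2)) * rexp (s ^ 2 / 2))) :=
    (hasSum_one_add_mul_mul_pow_div_factorial p _).mul_left _
  have hab (k : ℕ) : a k ≤ b k := by
    have hc : 0 ≤ s ^ (2 * k) / (2 ^ k * k.factorial * (2 * k).factorial) := by
      have := (even_two_mul k).pow_nonneg s
      positivity
    calc a k = s ^ (2 * k) / (2 ^ k * k.factorial * (2 * k).factorial)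
          * ((1 + p * k) * (2 * k).factorial * m 0) := by
          simp only [a]; rw [div_pow, ← pow_mul]; field_simp
      _ ≤ s ^ (2 * k) / (2 ^ k * k.factorial * (2 * k).factorial)
          * (2 ^ k * k.factorial * m k) :=
          mul_le_mul_of_nonneg_left (one_add_mul_mul_factorial_le hp h0 hm k) hc
      _ = b k := by simp only [b]; field_simp
  have hb_nonneg (k : ℕ) : 0 ≤ b k := le_trans (by positivity) (hab k)
  have hb : Summable b := summable_of_sum_range_le hb_nonneg hI
  have hbI : ∑' k, b k ≤ I := Real.tsum_le_of_sum_range_le hb_nonneg hI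
  refine ⟨ha.tsum_eq ▸ (ha.summable.tsum_le_tsum hab hb).trans hbI, fun hp2 hm0 hs => ?_⟩
  -- `b 2 - a 2 = m 0 * s⁴ * p (p - 2) / 24`
  have hab2 : a 2 < b 2 := by
    simp only [a, b, hm]
    norm_num [Nat.factorial]
    have hp0 : 0 < p - 2 := sub_pos.2 hp2
    have hgap : 0 < m 0 * s ^ 4 * (p * (p - 2)) / 24 := by positivity
    linear_combination hgap
  exact ha.tsum_eq ▸ (ha.summable.tsum_lt_tsum hab hab2 hb).trans_le hbI

/-- For `p ∈ [2,∞)` and all real `s`, `λ_p(s) − λ_p(0) ≥ (p/2)·λ_p(0)·s²`, strictly if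
`p > 2` and `s ≠ 0`. -/
theorem stmt8 (p : ℝ) (hp : 2 ≤ p) (s : ℝ) :
    p / 2 * lam p 0 * s ^ 2 ≤ lam p s - lam p 0 ∧
    (2 < p → s ≠ 0 → p / 2 * lam p 0 * s ^ 2 < lam p s - lam p 0) := by
  have hp0 : 0 ≤ p := by linarith
  set m : ℕ → ℝ := fun k => ∫ x, |x| ^ (p + 2 * k) ∂γ with hm_def
  have hm (k : ℕ) : m (k + 1) = (p + 1 + 2 * k) * m k := by
    simp only [hm_def, Nat.cast_succ]
    have hk : -1 < p + 2 * k := by linarith [show (0 : ℝ) ≤ p + 2 * k by positivity]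
    rw [show p + 2 * (k + 1) = p + 2 * k + 2 by ring, integral_abs_rpow_add_two_γ hk]
    ring
  have hm0 : m 0 = lam p 0 := by simp [hm_def, lam]
  have hm0_pos : 0 < m 0 := by
    simpa [hm_def] using integral_abs_rpow_γ_pos (q := p) (by linarith)
  obtain ⟨hle, hlt⟩ := mul_one_add_mul_mul_exp_le hp hm0_pos.le hm
    (sum_range_le_integral_abs_rpow_mul_cosh hp0 s)
  have hlam : lam p s = (∫ x, |x| ^ p * cosh (s * x) ∂γ) / rexp (s ^ 2 / 2) := by
    rw [lam_eq_exp_mul_integral_cosh hp0, neg_div, exp_neg]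
    ring
  rw [hlam, ← hm0]
  constructor
  · have := (le_div_iff₀ (exp_pos _)).2 (mul_assoc (m 0) _ _ ▸ hle)
    linarith
  · intro hp2 hs
    have := (lt_div_iff₀ (exp_pos _)).2 (mul_assoc (m 0) _ _ ▸ hlt hp2 hm0_pos hs)
    linarith
end

section
/- For each p ∈ [0,∞) there exists a constant C > 0 such that for all real s: λ_{p,3}(s) ≤ C if |s| ≤ 1, and λ_{p,3}(s) ≤ C·(1 + |s|^{3p-1}) if |s| > 1. -/
/-!
Write `X = |Z + s|^p`. For any constant `a`, the triangle inequality and Jensen's inequality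
for `|X - a|` give `E|X - EX|^q ≤ 2^q E|X - a|^q`; take `a = |s|^p`. The increment
`||z + s|^p - |s|^p|` is at most `|z|^p` for `p ≤ 1` (subadditivity of `t ↦ t^p`) and at most
`p |z| (|z| + |s|)^(p-1)` for `p ≥ 1` (convexity), so in both cases it is dominated by
`max p 1 * (1 + |z|)^(r+1) * max |s| 1 ^ r` with `r = max (p - 1) 0`. Since the Gaussian has
moments of all orders, `λ_{p,q}(s) = O(max |s| 1 ^ (r q))`, and `3 r ≤ max (3 p - 1) 0`.
-/

open MeasureTheory ProbabilityTheory Real Set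

/-- `λ_{p,m}(s) = E||Z+s|^p − λ_p(s)|^m` for a standard normal `Z`. -/
noncomputable def lamm (p m s : ℝ) : ℝ := ∫ z, (abs (|z + s| ^ p - lam p s)) ^ m ∂γ

namespace Real

lemma rpow_add_le_mul_rpow_add_rpow {a b q : ℝ} (ha : 0 ≤ a) (hb : 0 ≤ b) (hq : 1 ≤ q) :
    (a + b) ^ q ≤ 2 ^ (q - 1) * (a ^ q + b ^ q) := by
  lift a to NNReal using ha
  lift b to NNReal using hb
  exact_mod_cast NNReal.rpow_add_le_mul_rpow_add_rpow a b hq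

lemma abs_rpow_sub_rpow_le_abs_sub_rpow {x y p : ℝ} (hx : 0 ≤ x) (hy : 0 ≤ y) (hp₀ : 0 ≤ p)
    (hp₁ : p ≤ 1) : |x ^ p - y ^ p| ≤ |x - y| ^ p := by
  wlog hyx : y ≤ x generalizing x y
  · rw [abs_sub_comm, abs_sub_comm x]
    exact this hy hx (le_of_not_ge hyx)
  have hsplit : x ^ p ≤ y ^ p + (x - y) ^ p := by
    simpa using rpow_add_le_add_rpow hy (sub_nonneg.2 hyx) hp₀ hp₁
  rw [abs_of_nonneg (sub_nonneg.2 (rpow_le_rpow hy hyx hp₀)), abs_of_nonneg (sub_nonneg.2 hyx)]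
  linarith

lemma rpow_sub_rpow_le_mul_sub {a b p : ℝ} (hb : 0 ≤ b) (hba : b ≤ a) (hp : 1 ≤ p) :
    a ^ p - b ^ p ≤ p * a ^ (p - 1) * (a - b) := by
  rcases hba.eq_or_lt with rfl | hlt
  · simp
  have hslope := (convexOn_rpow hp).slope_le_of_hasDerivAt (mem_Ici.2 hb)
    (mem_Ici.2 (hb.trans hba)) hlt (hasDerivAt_rpow_const (Or.inr hp))
  rwa [slope_def_field, div_le_iff₀ (sub_pos.2 hlt)] at hslope

lemma abs_rpow_sub_rpow_le_mul_max {x y p : ℝ} (hx : 0 ≤ x) (hy : 0 ≤ y) (hp : 1 ≤ p) :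
    |x ^ p - y ^ p| ≤ p * max x y ^ (p - 1) * |x - y| := by
  wlog hyx : y ≤ x generalizing x y
  · rw [abs_sub_comm, abs_sub_comm x, max_comm]
    exact this hy hx (le_of_not_ge hyx)
  rw [abs_of_nonneg (sub_nonneg.2 (rpow_le_rpow hy hyx (by linarith))),
    abs_of_nonneg (sub_nonneg.2 hyx), max_eq_left hyx]
  exact rpow_sub_rpow_le_mul_sub hy hyx hp

end Real

lemma abs_abs_add_rpow_sub_abs_rpow_le {p : ℝ} (hp : 0 ≤ p) (z s : ℝ) :
    |(|z + s| ^ p - |s| ^ p)| ≤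
      max p 1 * (1 + |z|) ^ (max (p - 1) 0 + 1) * max |s| 1 ^ max (p - 1) 0 := by
  have hz : |(|z + s| - |s|)| ≤ |z| := by simpa using abs_abs_sub_abs_le_abs_sub (z + s) s
  rcases le_total p 1 with hp₁ | hp₁
  · rw [max_eq_right hp₁, max_eq_right (by linarith), zero_add, rpow_zero, rpow_one, one_mul,
      mul_one]
    calc |(|z + s| ^ p - |s| ^ p)| ≤ |(|z + s| - |s|)| ^ p :=
          abs_rpow_sub_rpow_le_abs_sub_rpow (abs_nonneg _) (abs_nonneg _) hp hp₁
      _ ≤ (1 + |z|) ^ p := rpow_le_rpow (abs_nonneg _) (by linarith) hp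
      _ ≤ 1 + |z| := by
        simpa using rpow_le_rpow_of_exponent_le (by linarith [abs_nonneg z]) hp₁
  · rw [max_eq_left hp₁, max_eq_left (by linarith), sub_add_cancel]
    have hmax : max |z + s| |s| ≤ (1 + |z|) * max |s| 1 := by
      have := abs_add_le z s
      apply max_le <;>
        nlinarith [le_max_left |s| 1, le_max_right |s| 1, abs_nonneg z, abs_nonneg s]
    calc |(|z + s| ^ p - |s| ^ p)| ≤ p * max |z + s| |s| ^ (p - 1) * |(|z + s| - |s|)| :=
          abs_rpow_sub_rpow_le_mul_max (abs_nonneg _) (abs_nonneg _) hp₁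
      _ ≤ p * ((1 + |z|) * max |s| 1) ^ (p - 1) * (1 + |z|) := by
        gcongr
        linarith
      _ = p * (1 + |z|) ^ p * max |s| 1 ^ (p - 1) := by
        have hsplit : (1 + |z|) ^ p = (1 + |z|) ^ (p - 1) * (1 + |z|) := by
          rw [← rpow_add_one (by positivity), sub_add_cancel]
        rw [mul_rpow (by positivity) (by positivity), hsplit]
        ring

section CentralMoment

variable {Ω : Type*} [MeasurableSpace Ω] {μ : Measure Ω} [IsProbabilityMeasure μ]

lemma integral_abs_sub_integral_rpow_le {f : Ω → ℝ} {q : ℝ} (hq : 1 ≤ q) (a : ℝ)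
    (hf : Integrable f μ) (hfq : Integrable (fun x => |f x - a| ^ q) μ) :
    ∫ x, |f x - ∫ y, f y ∂μ| ^ q ∂μ ≤ 2 ^ q * ∫ x, |f x - a| ^ q ∂μ := by
  set m := ∫ x, |f x - a| ∂μ
  have hfa : Integrable (fun x => |f x - a|) μ := (hf.sub (integrable_const a)).abs
  have hmean : |(∫ y, f y ∂μ) - a| ≤ m := by
    simpa [integral_sub hf (integrable_const a)] using
      abs_integral_le_integral_abs (f := fun x => f x - a) (μ := μ)
  have hpointwise (x : Ω) : |f x - ∫ y, f y ∂μ| ≤ |f x - a| + m :=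
    (abs_sub_le _ a _).trans (by rw [abs_sub_comm a]; gcongr)
  have hjensen : m ^ q ≤ ∫ x, |f x - a| ^ q ∂μ :=
    (convexOn_rpow hq).map_integral_le (continuousOn_id.rpow_const fun _ _ => Or.inr (by linarith))
      isClosed_Ici (ae_of_all _ fun x => mem_Ici.2 (abs_nonneg _)) hfa hfq
  have hm : 0 ≤ m := integral_nonneg fun x => abs_nonneg _
  calc ∫ x, |f x - ∫ y, f y ∂μ| ^ q ∂μ
      ≤ ∫ x, 2 ^ (q - 1) * (|f x - a| ^ q + m ^ q) ∂μ := by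
        refine integral_mono_of_nonneg (ae_of_all _ fun x => by positivity)
          ((hfq.add (integrable_const _)).const_mul _) (ae_of_all _ fun x => ?_)
        exact (rpow_le_rpow (abs_nonneg _) (hpointwise x) (by linarith)).trans
          (rpow_add_le_mul_rpow_add_rpow (abs_nonneg _) hm hq)
    _ = 2 ^ (q - 1) * ((∫ x, |f x - a| ^ q ∂μ) + m ^ q) := by
        rw [integral_const_mul, integral_add hfq (integrable_const _), integral_const,
          probReal_univ, one_smul]
    _ ≤ 2 ^ (q - 1) * (2 * ∫ x, |f x - a| ^ q ∂μ) := by gcongr; linarith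
    _ = 2 ^ q * ∫ x, |f x - a| ^ q ∂μ := by
        rw [← mul_assoc, ← rpow_add_one two_ne_zero, sub_add_cancel]

end CentralMoment

instance : IsProbabilityMeasure γ := by unfold γ; infer_instance

lemma integrable_abs_add_rpow (s : ℝ) {r : ℝ} (hr : 0 ≤ r) :
    Integrable (fun z => |z + s| ^ r) γ := by
  have h := ((memLp_id_gaussianReal (μ := 0) (v := 1) r.toNNReal).add
    (memLp_const s)).integrable_norm_rpow'
  simp only [ENNReal.coe_toReal, coe_toNNReal _ hr, Pi.add_apply, id, norm_eq_abs] at h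
  unfold γ
  exact h

lemma integrable_one_add_abs_rpow {r : ℝ} (hr : 0 ≤ r) :
    Integrable (fun z => (1 + |z|) ^ r) γ := by
  have h := ((memLp_const (μ := gaussianReal 0 1) (1 : ℝ)).add
    (memLp_id_gaussianReal r.toNNReal).norm).integrable_norm_rpow'
  simp only [ENNReal.coe_toReal, coe_toNNReal _ hr, Pi.add_apply, id, norm_eq_abs] at h
  have habs (z : ℝ) : |(1 + |z|)| = 1 + |z| := abs_of_nonneg (by positivity)
  unfold γ
  simpa only [habs] using h

lemma abs_abs_add_rpow_sub_abs_rpow_rpow_le {p q : ℝ} (hp : 0 ≤ p) (hq : 0 ≤ q) (z s : ℝ) :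
    |(|z + s| ^ p - |s| ^ p)| ^ q ≤
      max p 1 ^ q * (1 + |z|) ^ ((max (p - 1) 0 + 1) * q) * max |s| 1 ^ (max (p - 1) 0 * q) := by
  have h1z : 0 ≤ 1 + |z| := by positivity
  have hM : 0 ≤ max |s| 1 := le_max_of_le_right zero_le_one
  calc |(|z + s| ^ p - |s| ^ p)| ^ q
      ≤ (max p 1 * (1 + |z|) ^ (max (p - 1) 0 + 1) * max |s| 1 ^ max (p - 1) 0) ^ q :=
        rpow_le_rpow (abs_nonneg _) (abs_abs_add_rpow_sub_abs_rpow_le hp z s) hq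
    _ = _ := by
        rw [mul_rpow (by positivity) (by positivity), mul_rpow (by positivity) (by positivity),
          ← rpow_mul h1z, ← rpow_mul hM]

lemma integrable_abs_abs_add_rpow_sub_abs_rpow_rpow {p q : ℝ} (hp : 0 ≤ p) (hq : 0 ≤ q) (s : ℝ) :
    Integrable (fun z => |(|z + s| ^ p - |s| ^ p)| ^ q) γ := by
  refine (((integrable_one_add_abs_rpow (r := (max (p - 1) 0 + 1) * q) (by positivity)).const_mul
    (max p 1 ^ q)).mul_const (max |s| 1 ^ (max (p - 1) 0 * q))).mono' ?_
    (ae_of_all _ fun z => ?_)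
  · exact ((continuous_rpow_const hq).comp
      (by fun_prop : Continuous fun z : ℝ => |(|z + s| ^ p - |s| ^ p)|)).aestronglyMeasurable
  · rw [norm_of_nonneg (by positivity)]
    exact abs_abs_add_rpow_sub_abs_rpow_rpow_le hp hq z s

lemma integral_abs_abs_add_rpow_sub_abs_rpow_rpow_le {p q : ℝ} (hp : 0 ≤ p) (hq : 0 ≤ q) (s : ℝ) :
    ∫ z, |(|z + s| ^ p - |s| ^ p)| ^ q ∂γ ≤
      max p 1 ^ q * (∫ z, (1 + |z|) ^ ((max (p - 1) 0 + 1) * q) ∂γ) *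
        max |s| 1 ^ (max (p - 1) 0 * q) := by
  rw [← integral_const_mul, ← integral_mul_const]
  exact integral_mono_of_nonneg (ae_of_all _ fun z => by positivity)
    (((integrable_one_add_abs_rpow (by positivity)).const_mul _).mul_const _)
    (ae_of_all _ fun z => abs_abs_add_rpow_sub_abs_rpow_rpow_le hp hq z s)

lemma exists_lamm_le_mul_max_one_rpow {p q : ℝ} (hp : 0 ≤ p) (hq : 1 ≤ q) :
    ∃ K, ∀ s, lamm p q s ≤ K * max |s| 1 ^ (max (p - 1) 0 * q) := by
  refine ⟨2 ^ q * (max p 1 ^ q * ∫ z, (1 + |z|) ^ ((max (p - 1) 0 + 1) * q) ∂γ), fun s => ?_⟩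
  calc lamm p q s ≤ 2 ^ q * ∫ z, |(|z + s| ^ p - |s| ^ p)| ^ q ∂γ :=
        integral_abs_sub_integral_rpow_le hq (|s| ^ p) (integrable_abs_add_rpow s hp)
          (integrable_abs_abs_add_rpow_sub_abs_rpow_rpow hp (by linarith) s)
    _ ≤ _ := by
        rw [mul_assoc]
        gcongr
        exact integral_abs_abs_add_rpow_sub_abs_rpow_rpow_le hp (by linarith) s

/-- For `p ∈ [0,∞)` there is `C > 0` such that `λ_{p,3}(s) ≤ C` for `|s| ≤ 1` and
`λ_{p,3}(s) ≤ C·(1+|s|^{3p-1})` for `|s| > 1`. -/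
theorem stmt10 (p : ℝ) (hp : 0 ≤ p) :
    ∃ C : ℝ, 0 < C ∧ ∀ s : ℝ,
      (|s| ≤ 1 → lamm p 3 s ≤ C) ∧
      (1 < |s| → lamm p 3 s ≤ C * (1 + |s| ^ (3 * p - 1))) := by
  obtain ⟨K, hK⟩ := exists_lamm_le_mul_max_one_rpow hp (by norm_num : (1 : ℝ) ≤ 3)
  refine ⟨max K 1, by positivity, fun s => ⟨fun hs => ?_, fun hs => ?_⟩⟩
  · have hbound := hK s
    rw [max_eq_right hs, one_rpow, mul_one] at hbound
    exact hbound.trans (le_max_left K 1)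
  · have hgrowth : |s| ^ (max (p - 1) 0 * 3) ≤ 1 + |s| ^ (3 * p - 1) := by
      rcases le_total p 1 with hp₁ | hp₁
      · rw [max_eq_right (by linarith), zero_mul, rpow_zero]
        linarith [rpow_nonneg (abs_nonneg s) (3 * p - 1)]
      · rw [max_eq_left (by linarith)]
        linarith [rpow_le_rpow_of_exponent_le hs.le (by linarith : (p - 1) * 3 ≤ 3 * p - 1)]
    have hbound := hK s
    rw [max_eq_left hs.le] at hbound
    calc lamm p 3 s ≤ K * |s| ^ (max (p - 1) 0 * 3) := hbound
      _ ≤ max K 1 * (1 + |s| ^ (3 * p - 1)) := by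
          gcongr
          exact le_max_left K 1
end

section
/- For each integer m ≥ 1 there exists a constant C > 0 such that for every real s ≥ e one has | E (ln|Z+s|)^m − (ln s)^m | ≤ C. -/
/-!
Write `a = log |z + s|` and `b = log s ≥ 1`. Where `|z| ≤ s / 2`, the ratio `|z + s| / s` lies
in `[1/2, 3/2]`, so `|a - b| ≤ 2 |z| / s`, and the mean value bound
`|a^m - b^m| ≤ m |a - b| (2b)^(m-1)` together with `b^(m-1) ≤ (m-1)! e^b = (m-1)! s` gives
`|a^m - b^m| ≤ 2^m m! |z|`. Where `|z| > s / 2`, both `|a|^m` and `b^m` are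
`O(1 + |z| + |z + s|^(-1/2))`, since `|log t|^m` is dominated by `t` for `t ≥ 1` and by
`t^(-1/2)` for `t ≤ 1`. Finally `E |Z|` is finite and `E |Z + s|^(-1/2)` is bounded uniformly
in `s`, because the density of `Z + s` is at most `1` and `|x|^(-1/2)` is integrable near `0`.
-/

open MeasureTheory ProbabilityTheory Real Set

open scoped Nat

lemma pow_le_factorial_mul_exp (n : ℕ) {x : ℝ} (hx : 0 ≤ x) : x ^ n ≤ n ! * exp x := by
  have := pow_div_factorial_le_exp x hx n
  rwa [div_le_iff₀ (by positivity), mul_comm] at this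

lemma abs_log_pow_le (n : ℕ) {t : ℝ} (ht : 0 ≤ t) :
    |log t| ^ n ≤ 2 ^ n * n ! * (1 + t + t ^ (-(1 / 2) : ℝ)) := by
  have hw : 0 ≤ t ^ (-(1 / 2) : ℝ) := rpow_nonneg ht _
  rcases ht.eq_or_lt with rfl | ht
  · calc |log 0| ^ n ≤ 1 := by rcases n with _ | n <;> simp
      _ ≤ 2 ^ n * n ! * 1 := le_mul_of_one_le_left zero_le_one
          (one_le_mul_of_one_le_of_one_le (one_le_pow₀ one_le_two) (mod_cast n.factorial_pos))
      _ ≤ _ := by gcongr; linarith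
  have h2n : (1 : ℝ) ≤ 2 ^ n := one_le_pow₀ one_le_two
  rcases le_total 1 t with h1 | h1
  · calc |log t| ^ n = log t ^ n := by rw [abs_of_nonneg (log_nonneg h1)]
      _ ≤ n ! * exp (log t) := pow_le_factorial_mul_exp n (log_nonneg h1)
      _ ≤ 2 ^ n * n ! * t := by
        rw [exp_log ht]; gcongr; exact le_mul_of_one_le_left (by positivity) h2n
      _ ≤ 2 ^ n * n ! * (1 + t + t ^ (-(1 / 2) : ℝ)) := by gcongr; linarith
  · -- `|log t| = 2 x` for `x = -log t / 2`, and `exp x = t ^ (-1/2)`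
    have hx : 0 ≤ log t * (-(1 / 2)) := by nlinarith [log_nonpos ht.le h1]
    calc |log t| ^ n = 2 ^ n * (log t * (-(1 / 2))) ^ n := by
          rw [abs_of_nonpos (log_nonpos ht.le h1), ← mul_pow]; ring_nf
      _ ≤ 2 ^ n * (n ! * t ^ (-(1 / 2) : ℝ)) := by
          rw [rpow_def_of_pos ht]; gcongr; exact pow_le_factorial_mul_exp n hx
      _ ≤ 2 ^ n * n ! * (1 + t + t ^ (-(1 / 2) : ℝ)) := by
          rw [← mul_assoc]; gcongr; linarith

lemma abs_log_sub_log_le {s t : ℝ} (hs : 0 < s) (ht : s / 2 ≤ t) :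
    |log t - log s| ≤ 2 * |t - s| / s := by
  have ht0 : 0 < t := by linarith
  rw [abs_le]
  constructor
  · have := log_le_sub_one_of_pos (div_pos hs ht0)
    rw [log_div hs.ne' ht0.ne'] at this
    have h : s / t - 1 ≤ 2 * |t - s| / s := by
      rw [div_sub_one ht0.ne', div_le_div_iff₀ ht0 hs]
      nlinarith [le_abs_self (t - s), neg_abs_le (t - s), abs_nonneg (t - s)]
    linarith
  · have := log_le_sub_one_of_pos (div_pos ht0 hs)
    rw [log_div ht0.ne' hs.ne'] at this
    have h : t / s - 1 ≤ 2 * |t - s| / s := by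
      rw [div_sub_one hs.ne']
      gcongr
      linarith [le_abs_self (t - s), abs_nonneg (t - s)]
    linarith

lemma abs_log_pow_sub_log_pow_le_of_abs_le_half (m : ℕ) {s z : ℝ} (hs : exp 1 ≤ s)
    (hz : |z| ≤ s / 2) :
    |log |z + s| ^ m - log s ^ m| ≤ 2 ^ m * m ! * |z| := by
  have hs0 : 0 < s := (exp_pos 1).trans_le hs
  have hb : 1 ≤ log s := by rwa [le_log_iff_exp_le hs0]
  have hts : |(|z + s| - s)| ≤ |z| := by
    simpa [abs_of_pos hs0] using abs_abs_sub_abs_le_abs_sub (z + s) s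
  have hab : |log |z + s| - log s| ≤ 2 * |z| / s :=
    (abs_log_sub_log_le hs0 (by linarith [abs_le.mp hts])).trans (by gcongr)
  have hab1 : 2 * |z| / s ≤ 1 := by rw [div_le_one hs0]; linarith
  have hmax : max |(log |z + s|)| |log s| ≤ 2 * log s := by
    have := abs_sub_abs_le_abs_sub (log |z + s|) (log s)
    rw [abs_of_nonneg (by linarith : 0 ≤ log s)] at this ⊢
    exact max_le (by linarith) (by linarith)
  rcases m with _ | k
  · simp
  calc |log |z + s| ^ (k + 1) - log s ^ (k + 1)|
      ≤ |log |z + s| - log s| * (k + 1 : ℕ) * max |(log |z + s|)| |log s| ^ k := by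
        simpa using abs_pow_sub_pow_le (log |z + s|) (log s) (k + 1)
    _ ≤ 2 * |z| / s * (k + 1 : ℕ) * (2 * log s) ^ k := by gcongr
    _ ≤ 2 * |z| / s * (k + 1 : ℕ) * (2 ^ k * (k ! * s)) := by
        rw [mul_pow]
        gcongr
        simpa [exp_log hs0] using pow_le_factorial_mul_exp k (by linarith : 0 ≤ log s)
    _ = 2 ^ (k + 1) * (k + 1)! * |z| := by
        rw [Nat.factorial_succ]; push_cast; field_simp; ring

lemma abs_log_pow_sub_log_pow_le_of_half_lt_abs (m : ℕ) {s z : ℝ} (hs : 1 ≤ s)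
    (hz : s / 2 < |z|) :
    |log |z + s| ^ m - log s ^ m| ≤ 2 ^ m * m ! * (1 + 5 * |z| + |z + s| ^ (-(1 / 2) : ℝ)) := by
  have hzs : |z + s| ≤ 3 * |z| := by
    linarith [abs_add_le z s, abs_of_pos (by linarith : (0 : ℝ) < s)]
  have hlog_s : log s ^ m ≤ m ! * s := by
    simpa [exp_log (by linarith : (0 : ℝ) < s)] using pow_le_factorial_mul_exp m (log_nonneg hs)
  have h2m : (1 : ℝ) ≤ 2 ^ m := one_le_pow₀ one_le_two
  calc |log |z + s| ^ m - log s ^ m| ≤ |(log |z + s|)| ^ m + |log s| ^ m := by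
        rw [← abs_pow, ← abs_pow]; exact abs_sub _ _
    _ ≤ 2 ^ m * m ! * (1 + |z + s| + |z + s| ^ (-(1 / 2) : ℝ)) + m ! * s := by
        rw [abs_of_nonneg (log_nonneg hs)]
        exact add_le_add (abs_log_pow_le m (abs_nonneg _)) hlog_s
    _ ≤ 2 ^ m * m ! * (1 + 3 * |z| + |z + s| ^ (-(1 / 2) : ℝ)) + 2 ^ m * m ! * (2 * |z|) := by
        gcongr
        · exact le_mul_of_one_le_left (by positivity) h2m
        · linarith
    _ = 2 ^ m * m ! * (1 + 5 * |z| + |z + s| ^ (-(1 / 2) : ℝ)) := by ring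

lemma abs_log_pow_sub_log_pow_le (m : ℕ) {s : ℝ} (hs : exp 1 ≤ s) (z : ℝ) :
    |log |z + s| ^ m - log s ^ m| ≤ 5 * 2 ^ m * m ! * (1 + |z| + |z + s| ^ (-(1 / 2) : ℝ)) := by
  have hw : 0 ≤ |z + s| ^ (-(1 / 2) : ℝ) := rpow_nonneg (abs_nonneg _) _
  rw [mul_assoc 5, mul_comm 5, mul_assoc]
  rcases le_or_gt |z| (s / 2) with hz | hz
  · refine (abs_log_pow_sub_log_pow_le_of_abs_le_half m hs hz).trans ?_
    gcongr
    linarith [abs_nonneg z]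
  · have hs1 : 1 ≤ s := le_trans (by linarith [add_one_le_exp (1 : ℝ)]) hs
    refine (abs_log_pow_sub_log_pow_le_of_half_lt_abs m hs1 hz).trans ?_
    gcongr
    linarith [abs_nonneg z]

lemma abs_integral_sub_le_of_abs_sub_le {α : Type*} [MeasurableSpace α] {μ : Measure α}
    [IsProbabilityMeasure μ] {f g : α → ℝ} {c : ℝ} (hf : AEStronglyMeasurable f μ)
    (hg : Integrable g μ) (hfg : ∀ x, |f x - c| ≤ g x) :
    |∫ x, f x ∂μ - c| ≤ ∫ x, g x ∂μ := by
  have hfc : Integrable (fun x ↦ f x - c) μ :=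
    hg.mono' (hf.sub aestronglyMeasurable_const) (ae_of_all _ hfg)
  have hf_int : Integrable f μ :=
    (hfc.add (integrable_const c)).congr (ae_of_all _ fun x ↦ sub_add_cancel (f x) c)
  rw [← norm_eq_abs]
  calc ‖∫ x, f x ∂μ - c‖ = ‖∫ x, (f x - c) ∂μ‖ := by
        rw [integral_sub hf_int (integrable_const c), integral_const, probReal_univ, one_smul]
    _ ≤ ∫ x, g x ∂μ := norm_integral_le_of_norm_le hg (ae_of_all _ hfg)

lemma intervalIntegrable_abs_rpow {r : ℝ} (hr : -1 < r) (a b : ℝ) :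
    IntervalIntegrable (fun x ↦ |x| ^ r) volume a b := by
  have hpos : ∀ c, 0 ≤ c → IntervalIntegrable (fun x ↦ |x| ^ r) volume 0 c := fun c hc ↦
    (intervalIntegral.intervalIntegrable_rpow' hr).congr <| by
      rw [uIoc_of_le hc]
      intro x hx
      simp only [abs_of_pos hx.1]
  have hall : ∀ c, IntervalIntegrable (fun x ↦ |x| ^ r) volume 0 c := by
    intro c
    rcases le_total 0 c with hc | hc
    · exact hpos c hc
    · rw [IntervalIntegrable.iff_comp_neg]
      simpa using hpos (-c) (by linarith)
  exact (hall a).symm.trans (hall b)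

lemma abs_rpow_le_one_add_indicator {r : ℝ} (hr : r ≤ 0) (x : ℝ) :
    |x| ^ r ≤ 1 + (Ioc (-1 : ℝ) 1).indicator (fun x ↦ |x| ^ r) x := by
  by_cases hx : x ∈ Ioc (-1 : ℝ) 1
  · rw [indicator_of_mem hx]; linarith
  · rw [indicator_of_notMem hx, add_zero]
    refine rpow_le_one_of_one_le_of_nonpos ?_ hr
    rw [mem_Ioc, not_and_or, not_lt, not_le] at hx
    rcases hx with hx | hx
    · rw [abs_of_neg (by linarith)]; linarith
    · rw [abs_of_pos (by linarith)]; linarith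

lemma measurable_abs_rpow (r : ℝ) : Measurable fun x : ℝ ↦ |x| ^ r :=
  measurable_abs.pow_const r

section LeVolume

variable {μ : Measure ℝ} {r : ℝ}

lemma integrable_abs_rpow_of_le_volume [IsFiniteMeasure μ] (hμ : μ ≤ volume) (hr₀ : -1 < r)
    (hr : r ≤ 0) : Integrable (fun x ↦ |x| ^ r) μ := by
  have hind : Integrable ((Ioc (-1 : ℝ) 1).indicator (fun x ↦ |x| ^ r)) μ :=
    (((intervalIntegrable_abs_rpow hr₀ (-1) 1).1).integrable_indicator
      measurableSet_Ioc).mono_measure hμ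
  refine ((integrable_const 1).add hind).mono' (measurable_abs_rpow r).aestronglyMeasurable
    (ae_of_all _ fun x ↦ ?_)
  rw [norm_eq_abs, abs_of_nonneg (by positivity)]
  exact abs_rpow_le_one_add_indicator hr x

lemma integral_abs_rpow_le_of_le_volume [IsProbabilityMeasure μ] (hμ : μ ≤ volume)
    (hr₀ : -1 < r) (hr : r ≤ 0) :
    ∫ x, |x| ^ r ∂μ ≤ 1 + ∫ x in Ioc (-1 : ℝ) 1, |x| ^ r := by
  have hind : Integrable ((Ioc (-1 : ℝ) 1).indicator (fun x ↦ |x| ^ r)) :=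
    ((intervalIntegrable_abs_rpow hr₀ (-1) 1).1).integrable_indicator measurableSet_Ioc
  calc ∫ x, |x| ^ r ∂μ
      ≤ ∫ x, (1 + (Ioc (-1 : ℝ) 1).indicator (fun x ↦ |x| ^ r) x) ∂μ :=
        integral_mono (integrable_abs_rpow_of_le_volume hμ hr₀ hr)
          ((integrable_const 1).add (hind.mono_measure hμ)) (abs_rpow_le_one_add_indicator hr)
    _ = 1 + ∫ x, (Ioc (-1 : ℝ) 1).indicator (fun x ↦ |x| ^ r) x ∂μ := by
        rw [integral_add (integrable_const 1) (hind.mono_measure hμ), integral_const,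
          probReal_univ, one_smul]
    _ ≤ 1 + ∫ x in Ioc (-1 : ℝ) 1, |x| ^ r := by
        rw [← integral_indicator measurableSet_Ioc]
        exact add_le_add_right (integral_mono_measure hμ
          (ae_of_all _ (indicator_nonneg fun x _ ↦ by positivity)) hind) 1

end LeVolume

lemma gaussianPDFReal_le_one (μ x : ℝ) : gaussianPDFReal μ 1 x ≤ 1 := by
  rw [gaussianPDFReal_def]
  refine mul_le_one₀ ?_ (exp_nonneg _) (exp_le_one_iff.mpr ?_)
  · refine inv_le_one_of_one_le₀ (one_le_sqrt.mpr ?_)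
    push_cast
    nlinarith [pi_gt_three]
  · have := sq_nonneg (x - μ)
    push_cast
    rw [neg_div]
    exact neg_nonpos.mpr (by positivity)

lemma gaussianReal_le_volume (μ : ℝ) : gaussianReal μ 1 ≤ volume := by
  rw [gaussianReal_of_var_ne_zero μ one_ne_zero]
  conv_rhs => rw [← withDensity_one (μ := volume)]
  exact withDensity_mono
    (ae_of_all _ fun x ↦ ENNReal.ofReal_le_one.mpr (gaussianPDFReal_le_one μ x))

instance inst_s12 : IsProbabilityMeasure γ := by
  rw [γ]; infer_instance

lemma γ_map_add_const (s : ℝ) : γ.map (· + s) = gaussianReal s 1 := by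
  rw [γ, gaussianReal_map_add_const, zero_add]

lemma integrable_abs_add_rpow_γ (s : ℝ) {r : ℝ} (hr₀ : -1 < r) (hr : r ≤ 0) :
    Integrable (fun z ↦ |z + s| ^ r) γ := by
  have := integrable_abs_rpow_of_le_volume (gaussianReal_le_volume s) hr₀ hr
  rwa [← γ_map_add_const,
    integrable_map_measure (measurable_abs_rpow r).aestronglyMeasurable (by fun_prop)] at this

lemma integral_abs_add_rpow_γ_le (s : ℝ) {r : ℝ} (hr₀ : -1 < r) (hr : r ≤ 0) :
    ∫ z, |z + s| ^ r ∂γ ≤ 1 + ∫ x in Ioc (-1 : ℝ) 1, |x| ^ r := by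
  have := integral_abs_rpow_le_of_le_volume (gaussianReal_le_volume s) hr₀ hr
  rwa [← γ_map_add_const,
    integral_map (by fun_prop) (measurable_abs_rpow r).aestronglyMeasurable] at this

theorem stmt12_general (m : ℕ) :
    ∃ C : ℝ, 0 < C ∧ ∀ s : ℝ, Real.exp 1 ≤ s →
      |(∫ z, (Real.log |z + s|) ^ m ∂γ) - (Real.log s) ^ m| ≤ C := by
  have hr₀ : -1 < (-(1 / 2) : ℝ) := by norm_num
  have hr : (-(1 / 2) : ℝ) ≤ 0 := by norm_num
  have habs : Integrable (fun z : ℝ ↦ |z|) γ :=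
    (memLp_one_iff_integrable.mp (memLp_id_gaussianReal 1)).abs
  refine ⟨5 * 2 ^ m * m ! *
      (1 + ∫ z, |z| ∂γ + (1 + ∫ x in Ioc (-1 : ℝ) 1, |x| ^ (-(1 / 2) : ℝ))),
    by positivity, fun s hs ↦ ?_⟩
  have hw := integrable_abs_add_rpow_γ s hr₀ hr
  have hlin : Integrable (fun z : ℝ ↦ 1 + |z|) γ := (integrable_const 1).add habs
  calc |∫ z, log |z + s| ^ m ∂γ - log s ^ m|
      ≤ ∫ z, 5 * 2 ^ m * m ! * (1 + |z| + |z + s| ^ (-(1 / 2) : ℝ)) ∂γ :=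
        abs_integral_sub_le_of_abs_sub_le
          ((measurable_log.comp (measurable_add_const s).abs).pow_const m).aestronglyMeasurable
          ((hlin.add hw).const_mul _)
          (abs_log_pow_sub_log_pow_le m hs)
    _ = 5 * 2 ^ m * m ! * (1 + ∫ z, |z| ∂γ + ∫ z, |z + s| ^ (-(1 / 2) : ℝ) ∂γ) := by
        rw [integral_const_mul, integral_add hlin hw,
          integral_add (integrable_const 1) habs, integral_const, probReal_univ, one_smul]
    _ ≤ _ := by gcongr; exact integral_abs_add_rpow_γ_le s hr₀ hr

/-- For each integer `m ≥ 1` there is `C > 0` such that for every `s ≥ e` one has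
`|E (ln|Z+s|)^m − (ln s)^m| ≤ C`. -/
theorem stmt12 (m : ℕ) (hm : 1 ≤ m) :
    ∃ C : ℝ, 0 < C ∧ ∀ s : ℝ, Real.exp 1 ≤ s →
      |(∫ z, (Real.log |z + s|) ^ m ∂γ) - (Real.log s) ^ m| ≤ C :=
  stmt12_general m
end

section
/- The function t ↦ λ̃(√t) is concave on [0,∞). -/
open MeasureTheory ProbabilityTheory Real Set

/-- `λ̃(s) = E ln|Z+s|` for a standard normal `Z`. -/
noncomputable def tlam (s : ℝ) : ℝ := ∫ z, Real.log |z + s| ∂γ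

/-!
Frullani's integral `log a = ∫₀^∞ (e^{-u} - e^{-au}) / u du`, applied to `a = (Z + s)²` and
integrated against the Gaussian law (Fubini), gives
`2 λ̃(s) = ∫₀^∞ (e^{-u} - E e^{-u(Z+s)²}) / u du`. The Gaussian Laplace transform
`E e^{-u(Z+s)²} = e^{-us²/(1+2u)} / √(1+2u)` is the exponential of a linear function of `t = s²`,
so for each `u > 0` the integrand is concave in `t`, and so is its integral.
-/

open scoped NNReal

lemma integral_exp_neg_mul_of_ne_zero {u : ℝ} (hu : u ≠ 0) (b a : ℝ) :
    ∫ t in b..a, exp (-t * u) = (exp (-b * u) - exp (-a * u)) / u := by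
  have h := intervalIntegral.integral_comp_mul_left (fun t => exp (-t)) hu (a := b) (b := a)
  simp only [intervalIntegral.integral_comp_neg, integral_exp, smul_eq_mul] at h
  simp_rw [neg_mul, mul_comm _ u, h]
  field_simp

lemma integral_exp_neg_mul_Ioi {t : ℝ} (ht : 0 < t) :
    ∫ u in Ioi 0, exp (-t * u) = t⁻¹ := by
  rw [integral_exp_mul_Ioi (neg_neg_of_pos ht)]
  simp

lemma frullani_exp_of_le {a b : ℝ} (hb : 0 < b) (hba : b ≤ a) :
    IntegrableOn (fun u => (exp (-b * u) - exp (-a * u)) / u) (Ioi 0) ∧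
      ∫ u in Ioi 0, (exp (-b * u) - exp (-a * u)) / u = log a - log b := by
  -- `(e^{-bu} - e^{-au}) / u = ∫_b^a e^{-tu} dt`, and `∫₀^∞ e^{-tu} du = 1 / t`.
  set μ := volume.restrict (Ioi (0 : ℝ))
  set ν := volume.restrict (Ioc b a)
  have hinner : ∀ u ∈ Ioi (0 : ℝ), ∫ t, exp (-t * u) ∂ν = (exp (-b * u) - exp (-a * u)) / u :=
    fun u hu => by
      rw [← intervalIntegral.integral_of_le hba, integral_exp_neg_mul_of_ne_zero hu.ne']
  have hF : Integrable (Function.uncurry fun u t => exp (-t * u)) (μ.prod ν) := by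
    have hmeas : AEStronglyMeasurable (Function.uncurry fun u t => exp (-t * u)) (μ.prod ν) :=
      (by fun_prop : Continuous fun p : ℝ × ℝ => exp (-p.2 * p.1)).aestronglyMeasurable
    refine (integrable_prod_iff' hmeas).2 ⟨?_, ?_⟩
    · filter_upwards [ae_restrict_mem measurableSet_Ioc] with t ht
      exact integrableOn_exp_mul_Ioi (neg_neg_of_pos (hb.trans_le ht.1.le)) 0
    · refine (ContinuousOn.integrableOn_Icc (continuousOn_inv₀.mono fun t ht =>
        (hb.trans_le ht.1).ne')).mono_set Ioc_subset_Icc_self |>.congr ?_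
      filter_upwards [ae_restrict_mem measurableSet_Ioc] with t ht
      simp only [Function.uncurry_apply_pair, norm_of_nonneg (exp_pos _).le]
      exact (integral_exp_neg_mul_Ioi (hb.trans ht.1)).symm
  refine ⟨hF.integral_prod_left.congr ?_, ?_⟩
  · filter_upwards [ae_restrict_mem measurableSet_Ioi] with u hu using hinner u hu
  calc ∫ u in Ioi 0, (exp (-b * u) - exp (-a * u)) / u
      = ∫ u, ∫ t, exp (-t * u) ∂ν ∂μ := (setIntegral_congr_fun measurableSet_Ioi hinner).symm
    _ = ∫ t, ∫ u, exp (-t * u) ∂μ ∂ν := integral_integral_swap hF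
    _ = ∫ t in b..a, t⁻¹ := by
      rw [intervalIntegral.integral_of_le hba]
      exact setIntegral_congr_fun measurableSet_Ioc fun t ht =>
        integral_exp_neg_mul_Ioi (hb.trans ht.1)
    _ = log a - log b := by
      rw [integral_inv_of_pos hb (hb.trans_le hba), log_div (hb.trans_le hba).ne' hb.ne']

lemma frullani_exp {a : ℝ} (ha : 0 < a) :
    IntegrableOn (fun u => (exp (-u) - exp (-a * u)) / u) (Ioi 0) ∧
      ∫ u in Ioi 0, (exp (-u) - exp (-a * u)) / u = log a := by
  rcases le_total 1 a with h | h
  · simpa using frullani_exp_of_le one_pos h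
  · obtain ⟨hint, hval⟩ := frullani_exp_of_le ha h
    have hneg : (fun u => (exp (-u) - exp (-a * u)) / u)
        = fun u => -((exp (-a * u) - exp (-1 * u)) / u) := by
      ext u; simp only [neg_mul, one_mul]; ring
    rw [hneg, integral_neg, hval]
    exact ⟨hint.neg, by simp⟩

lemma integral_norm_frullani_exp {a : ℝ} (ha : 0 < a) :
    ∫ u in Ioi 0, ‖(exp (-u) - exp (-a * u)) / u‖ = |log a| := by
  rcases le_total 1 a with h | h
  · rw [abs_of_nonneg (log_nonneg h), ← (frullani_exp ha).2]
    refine setIntegral_congr_fun measurableSet_Ioi fun u (hu : 0 < u) => norm_of_nonneg ?_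
    exact div_nonneg (sub_nonneg.2 (exp_le_exp.2 (by nlinarith))) hu.le
  · rw [abs_of_nonpos (log_nonpos ha.le h), show -log a = log 1 - log a by simp,
      ← (frullani_exp_of_le ha h).2]
    refine setIntegral_congr_fun measurableSet_Ioi fun u (hu : 0 < u) => ?_
    rw [norm_of_nonpos (div_nonpos_of_nonpos_of_nonneg
      (sub_nonpos.2 (exp_le_exp.2 (by nlinarith))) hu.le)]
    simp only [neg_mul, one_mul]
    ring

lemma integral_log_eq_integral_Ioi {Ω : Type*} [MeasurableSpace Ω] {μ : Measure Ω}
    [IsProbabilityMeasure μ] {X : Ω → ℝ} (hX : Measurable X) (hpos : ∀ᵐ ω ∂μ, 0 < X ω)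
    (hlog : Integrable (fun ω => log (X ω)) μ) :
    IntegrableOn (fun u => (exp (-u) - ∫ ω, exp (-X ω * u) ∂μ) / u) (Ioi 0) ∧
      ∫ ω, log (X ω) ∂μ = ∫ u in Ioi 0, (exp (-u) - ∫ ω, exp (-X ω * u) ∂μ) / u := by
  set ν := volume.restrict (Ioi (0 : ℝ))
  set F : Ω → ℝ → ℝ := fun ω u => (exp (-u) - exp (-X ω * u)) / u
  have hF : Integrable (Function.uncurry F) (μ.prod ν) := by
    have hmeas : AEStronglyMeasurable (Function.uncurry F) (μ.prod ν) :=
      (by fun_prop : Measurable fun p : Ω × ℝ => (exp (-p.2) - exp (-X p.1 * p.2)) / p.2)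
        |>.aestronglyMeasurable
    refine (integrable_prod_iff hmeas).2 ⟨?_, hlog.abs.congr ?_⟩
    · filter_upwards [hpos] with ω hω using (frullani_exp hω).1
    · filter_upwards [hpos] with ω hω using (integral_norm_frullani_exp hω).symm
  have hinner : ∀ u ∈ Ioi (0 : ℝ), ∫ ω, F ω u ∂μ = (exp (-u) - ∫ ω, exp (-X ω * u) ∂μ) / u := by
    intro u (hu : 0 < u)
    have hbdd : Integrable (fun ω => exp (-X ω * u)) μ := by
      refine (integrable_const 1).mono' (by fun_prop) ?_
      filter_upwards [hpos] with ω hω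
      rw [norm_of_nonneg (exp_pos _).le, exp_le_one_iff]
      nlinarith
    rw [integral_div, integral_sub (integrable_const _) hbdd, integral_const, probReal_univ,
      one_smul]
  refine ⟨hF.integral_prod_right.congr ?_, ?_⟩
  · filter_upwards [ae_restrict_mem measurableSet_Ioi] with u hu using hinner u hu
  calc ∫ ω, log (X ω) ∂μ = ∫ ω, ∫ u, F ω u ∂ν ∂μ :=
        integral_congr_ae (by filter_upwards [hpos] with ω hω using (frullani_exp hω).2.symm)
    _ = ∫ u, ∫ ω, F ω u ∂μ ∂ν := integral_integral_swap hF
    _ = _ := setIntegral_congr_fun measurableSet_Ioi hinner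

lemma gaussianReal_le_smul_volume (m : ℝ) {v : ℝ≥0} (hv : v ≠ 0) :
    gaussianReal m v ≤ ENNReal.ofReal (√(2 * π * v))⁻¹ • volume := by
  rw [gaussianReal_of_var_ne_zero _ hv, ← withDensity_const]
  refine withDensity_mono (ae_of_all _ fun x => ENNReal.ofReal_le_ofReal ?_)
  rw [gaussianPDFReal_def]
  refine mul_le_of_le_one_right (by positivity) (exp_le_one_iff.2 ?_)
  exact div_nonpos_of_nonpos_of_nonneg (neg_nonpos.2 (sq_nonneg _)) (by positivity)

lemma integrable_log_add_gaussianReal (m : ℝ) {v : ℝ≥0} (hv : v ≠ 0) (s : ℝ) :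
    Integrable (fun z => log (z + s)) (gaussianReal m v) := by
  -- Near the singularity the density is bounded; away from it `|log x| ≤ |x|`.
  set K := Icc (-1 - s) (1 - s)
  rw [← integrableOn_univ, ← union_compl_self K]
  refine IntegrableOn.union ?_ ?_
  · have hK : IntegrableOn (fun z => log (z + s)) K :=
      (intervalIntegrable_iff_integrableOn_Icc_of_le (by linarith)).1
        (intervalIntegral.intervalIntegrable_log'.comp_add_right s)
    refine (hK.smul_measure (c := ENNReal.ofReal (√(2 * π * v))⁻¹) ENNReal.ofReal_ne_top)
      |>.mono_measure ?_
    rw [← Measure.restrict_smul]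
    exact Measure.restrict_mono subset_rfl (gaussianReal_le_smul_volume m hv)
  · refine Integrable.mono' (g := fun z => |z + s|)
      ((memLp_id_gaussianReal 1).integrable le_rfl |>.add (integrable_const s)).abs.integrableOn
      (measurable_log.comp (measurable_add_const s)).aestronglyMeasurable ?_
    filter_upwards [ae_restrict_mem measurableSet_Icc.compl] with z hz
    have h1 : 1 ≤ |z + s| := by
      simp only [K, mem_compl_iff, mem_Icc, not_and_or, not_le] at hz
      rcases hz with h | h
      · rw [abs_of_neg (by linarith)]; linarith
      · rw [abs_of_pos (by linarith)]; linarith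
    rw [norm_eq_abs, ← log_abs, abs_of_nonneg (log_nonneg h1)]
    exact log_le_self (abs_nonneg _)

lemma integral_exp_neg_sq_add_mul_gaussianReal (s : ℝ) {u : ℝ} (hu : 0 < 1 + 2 * u) :
    ∫ z, exp (-(z + s) ^ 2 * u) ∂gaussianReal 0 1
      = exp (-(s ^ 2 * u / (1 + 2 * u))) / √(1 + 2 * u) := by
  have h12 : 1 + 2 * u ≠ 0 := hu.ne'
  have hsq : ∀ z : ℝ, gaussianPDFReal 0 1 z * exp (-(z + s) ^ 2 * u)
      = ((√(2 * π))⁻¹ * exp (-(s ^ 2 * u / (1 + 2 * u)))) *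
        exp (-((1 + 2 * u) / 2) * (z + 2 * u * s / (1 + 2 * u)) ^ 2) := by
    intro z
    simp only [gaussianPDFReal, NNReal.coe_one, mul_one, sub_zero, mul_assoc, ← exp_add]
    congr 2
    field_simp
    ring
  rw [integral_gaussianReal_eq_integral_smul one_ne_zero]
  simp_rw [smul_eq_mul, hsq]
  rw [integral_const_mul, integral_add_right_eq_self (fun z => exp (-((1 + 2 * u) / 2) * z ^ 2)),
    integral_gaussian, div_div_eq_mul_div, sqrt_div' _ hu.le, sqrt_mul' _ zero_le_two,
    sqrt_mul zero_le_two]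
  have : √π ≠ 0 := (sqrt_pos.2 pi_pos).ne'
  field_simp

noncomputable def tlamSqrtIntegrand (t u : ℝ) : ℝ :=
  (exp (-u) - exp (-(t * u / (1 + 2 * u))) / √(1 + 2 * u)) / u

lemma two_mul_tlam_sqrt {t : ℝ} (ht : 0 ≤ t) :
    IntegrableOn (tlamSqrtIntegrand t) (Ioi 0) ∧
      2 * tlam √t = ∫ u in Ioi 0, tlamSqrtIntegrand t u := by
  set s := √t
  have := nullSingletonClass_gaussianReal (μ := 0) one_ne_zero
  have hpos : ∀ᵐ z ∂gaussianReal 0 1, 0 < (z + s) ^ 2 := by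
    filter_upwards [compl_mem_ae_iff.2 (measure_singleton (-s))] with z hz
    have : z + s ≠ 0 := fun h => hz (eq_neg_of_add_eq_zero_left h)
    positivity
  have hlog : Integrable (fun z => log ((z + s) ^ 2)) (gaussianReal 0 1) :=
    ((integrable_log_add_gaussianReal 0 one_ne_zero s).const_mul 2).congr
      (ae_of_all _ fun z => by simp [log_pow])
  obtain ⟨hint, hval⟩ := integral_log_eq_integral_Ioi (by fun_prop) hpos hlog
  have hlaplace : EqOn (fun u => (exp (-u) - ∫ z, exp (-(z + s) ^ 2 * u) ∂gaussianReal 0 1) / u)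
      (tlamSqrtIntegrand t) (Ioi 0) := fun u (hu : 0 < u) => by
    dsimp only [tlamSqrtIntegrand]
    rw [integral_exp_neg_sq_add_mul_gaussianReal s (by linarith), sq_sqrt ht]
  refine ⟨hint.congr_fun hlaplace measurableSet_Ioi, ?_⟩
  rw [← setIntegral_congr_fun measurableSet_Ioi hlaplace, ← hval, tlam, γ, ← integral_const_mul]
  simp [log_pow, log_abs]

lemma concaveOn_const_sub_mul_exp_mul (c : ℝ) {d : ℝ} (hd : 0 ≤ d) (k : ℝ) :
    ConcaveOn ℝ univ (fun t => c - d * exp (k * t)) := by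
  refine ⟨convex_univ, fun x _ y _ a b ha hb hab => ?_⟩
  have hexp := convexOn_exp.2 (mem_univ (k * x)) (mem_univ (k * y)) ha hb hab
  simp only [smul_eq_mul] at hexp ⊢
  rw [show k * (a * x + b * y) = a * (k * x) + b * (k * y) by ring]
  linear_combination mul_le_mul_of_nonneg_left hexp hd + c * hab

lemma concaveOn_tlamSqrtIntegrand {u : ℝ} (hu : 0 < u) :
    ConcaveOn ℝ univ (tlamSqrtIntegrand · u) := by
  refine (concaveOn_const_sub_mul_exp_mul (exp (-u) / u) (d := (u * √(1 + 2 * u))⁻¹)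
    (by positivity) (-(u / (1 + 2 * u)))).congr fun t _ => ?_
  have : 0 < 1 + 2 * u := by linarith
  dsimp only [tlamSqrtIntegrand]
  rw [show -(u / (1 + 2 * u)) * t = -(t * u / (1 + 2 * u)) by ring]
  field_simp

/-- The function `t ↦ λ̃(√t)` is concave on `[0,∞)`. -/
theorem stmt13 : ConcaveOn ℝ (Set.Ici 0) (fun t : ℝ => tlam (Real.sqrt t)) := by
  have hconc : ConcaveOn ℝ (Ici 0) fun t => ∫ u in Ioi 0, tlamSqrtIntegrand t u :=
    integral_concaveOn_of_integrand_ae (convex_Ici 0)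
      (ae_restrict_of_forall_mem measurableSet_Ioi fun u hu =>
        (concaveOn_tlamSqrtIntegrand hu).subset (subset_univ _) (convex_Ici 0))
      fun t ht => (two_mul_tlam_sqrt ht).1
  refine (hconc.smul (by norm_num : (0 : ℝ) ≤ 1 / 2)).congr fun t ht => ?_
  simp only [← (two_mul_tlam_sqrt ht).2, smul_eq_mul]
  ring
end
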